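/- arXiv:1907.03266 — 8 statements merged into one kernel-verified Lean document; each statement's English description precedes it below -/
import Mathlib

section
/- For t ≥ 7 with t not divisible by 3, the square of the cycle C_t is a core: every homomorphism from C_t^2 to itself is an automorphism. -/
/-- The square of the cycle `C_t`: vertices `ZMod t`, with `i ~ j` iff they differ by
`±1` or `±2` (mod `t`). -/
def cycleSq (t : ℕ) : SimpleGraph (ZMod t) where
  Adj i j := i ≠ j ∧ (j - i = 1 ∨ i - j = 1 ∨ j - i = 2 ∨ i - j = 2)
  symm := by
    constructor
    intro i j h
    exact ⟨h.1.symm, by tauto⟩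
  loopless := by
    constructor
    intro i h
    exact h.1 rfl


section CycleSqAux

variable {t : ℕ}

private lemma cycleSq_cast_ne (ht : 7 ≤ t) :
    ∀ n : ℕ, 0 < n → n < 7 → ((n : ZMod t) ≠ 0) := by
  haveI : NeZero t := ⟨by omega⟩
  intro n hn hn7 h
  rw [ZMod.natCast_eq_zero_iff] at h
  have := Nat.le_of_dvd hn h
  omega

private lemma cycleSq_keyP (ht : 7 ≤ t) : ∀ a b : ZMod t, (a = 1 ∨ a = -2) →
    (b = 1 ∨ b = -1 ∨ b = 2 ∨ b = -2) →
    (a + b = 1 ∨ a + b = -1 ∨ a + b = 2 ∨ a + b = -2) →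
    (b = 1 ∨ b = -2) := by
  have h1 : (1 : ZMod t) ≠ 0 := by simpa using cycleSq_cast_ne ht 1 (by norm_num) (by norm_num)
  have h2 : (2 : ZMod t) ≠ 0 := by simpa using cycleSq_cast_ne ht 2 (by norm_num) (by norm_num)
  have h4 : (3 : ZMod t) ≠ 0 := by simpa using cycleSq_cast_ne ht 3 (by norm_num) (by norm_num)
  have h5 : (4 : ZMod t) ≠ 0 := by simpa using cycleSq_cast_ne ht 4 (by norm_num) (by norm_num)
  have h6 : (5 : ZMod t) ≠ 0 := by simpa using cycleSq_cast_ne ht 5 (by norm_num) (by norm_num)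
  have h7 : (6 : ZMod t) ≠ 0 := by simpa using cycleSq_cast_ne ht 6 (by norm_num) (by norm_num)
  intro a b ha hb hs
  rcases ha with rfl | rfl <;> rcases hb with rfl | rfl | rfl | rfl <;>
    first
      | tauto
      | (exfalso
         rcases hs with h | h | h | h <;>
           first
             | exact h1 (by linear_combination h)
             | exact h1 (by linear_combination -h)
             | exact h2 (by linear_combination h)
             | exact h2 (by linear_combination -h)
             | exact h4 (by linear_combination h)
             | exact h4 (by linear_combination -h)
             | exact h5 (by linear_combination h)
             | exact h5 (by linear_combination -h)
             | exact h6 (by linear_combination h)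
             | exact h6 (by linear_combination -h)
             | exact h7 (by linear_combination h)
             | exact h7 (by linear_combination -h))

private lemma cycleSq_keyN (ht : 7 ≤ t) : ∀ a b : ZMod t, (a = -1 ∨ a = 2) →
    (b = 1 ∨ b = -1 ∨ b = 2 ∨ b = -2) →
    (a + b = 1 ∨ a + b = -1 ∨ a + b = 2 ∨ a + b = -2) →
    (b = -1 ∨ b = 2) := by
  have h1 : (1 : ZMod t) ≠ 0 := by simpa using cycleSq_cast_ne ht 1 (by norm_num) (by norm_num)
  have h2 : (2 : ZMod t) ≠ 0 := by simpa using cycleSq_cast_ne ht 2 (by norm_num) (by norm_num)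
  have h4 : (3 : ZMod t) ≠ 0 := by simpa using cycleSq_cast_ne ht 3 (by norm_num) (by norm_num)
  have h5 : (4 : ZMod t) ≠ 0 := by simpa using cycleSq_cast_ne ht 4 (by norm_num) (by norm_num)
  have h6 : (5 : ZMod t) ≠ 0 := by simpa using cycleSq_cast_ne ht 5 (by norm_num) (by norm_num)
  have h7 : (6 : ZMod t) ≠ 0 := by simpa using cycleSq_cast_ne ht 6 (by norm_num) (by norm_num)
  intro a b ha hb hs
  rcases ha with rfl | rfl <;> rcases hb with rfl | rfl | rfl | rfl <;>
    first
      | tauto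
      | (exfalso
         rcases hs with h | h | h | h <;>
           first
             | exact h1 (by linear_combination h)
             | exact h1 (by linear_combination -h)
             | exact h2 (by linear_combination h)
             | exact h2 (by linear_combination -h)
             | exact h4 (by linear_combination h)
             | exact h4 (by linear_combination -h)
             | exact h5 (by linear_combination h)
             | exact h5 (by linear_combination -h)
             | exact h6 (by linear_combination h)
             | exact h6 (by linear_combination -h)
             | exact h7 (by linear_combination h)
             | exact h7 (by linear_combination -h))

end CycleSqAux

/-- For `t ≥ 7` not divisible by `3`, the graph `C_t^2` is a core: every endomorphism
is an automorphism (i.e. is bijective). -/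
theorem stmt1 (t : ℕ) (ht : 7 ≤ t) (h3 : ¬ (3 ∣ t)) (f : cycleSq t →g cycleSq t) :
    Function.Bijective f := by
  haveI : NeZero t := ⟨by omega⟩
  classical
  have hcast := cycleSq_cast_ne (t := t) ht
  have h1 : (1 : ZMod t) ≠ 0 := by simpa using hcast 1 (by norm_num) (by norm_num)
  have h2 : (2 : ZMod t) ≠ 0 := by simpa using hcast 2 (by norm_num) (by norm_num)
  have h4 : (3 : ZMod t) ≠ 0 := by simpa using hcast 3 (by norm_num) (by norm_num)
  have h5 : (4 : ZMod t) ≠ 0 := by simpa using hcast 4 (by norm_num) (by norm_num)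
  have h6 : (5 : ZMod t) ≠ 0 := by simpa using hcast 5 (by norm_num) (by norm_num)
  have h7 : (6 : ZMod t) ≠ 0 := by simpa using hcast 6 (by norm_num) (by norm_num)
  -- single steps lie in {±1, ±2}
  have step1 : ∀ i : ZMod t, f (i+1) - f i = 1 ∨ f (i+1) - f i = -1 ∨
      f (i+1) - f i = 2 ∨ f (i+1) - f i = -2 := by
    intro i
    have hadj : (cycleSq t).Adj i (i+1) := by
      refine ⟨fun h => h1 (by linear_combination -h), ?_⟩
      left; ring
    obtain ⟨hne, h⟩ := f.map_adj hadj
    rcases h with h | h | h | h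
    · exact Or.inl h
    · exact Or.inr (Or.inl (by linear_combination -h))
    · exact Or.inr (Or.inr (Or.inl h))
    · exact Or.inr (Or.inr (Or.inr (by linear_combination -h)))
  -- sums of two consecutive steps lie in {±1, ±2}
  have step2 : ∀ i : ZMod t,
      (f (i+1) - f i) + (f (i+1+1) - f (i+1)) = 1 ∨
      (f (i+1) - f i) + (f (i+1+1) - f (i+1)) = -1 ∨
      (f (i+1) - f i) + (f (i+1+1) - f (i+1)) = 2 ∨
      (f (i+1) - f i) + (f (i+1+1) - f (i+1)) = -2 := by
    intro i
    have hadj : (cycleSq t).Adj i (i+1+1) := by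
      refine ⟨fun h => h2 (by linear_combination -h), ?_⟩
      right; right; left; ring
    obtain ⟨hne, h⟩ := f.map_adj hadj
    rcases h with h | h | h | h
    · exact Or.inl (by linear_combination h)
    · exact Or.inr (Or.inl (by linear_combination -h))
    · exact Or.inr (Or.inr (Or.inl (by linear_combination h)))
    · exact Or.inr (Or.inr (Or.inr (by linear_combination -h)))
  have keyP := cycleSq_keyP (t := t) ht
  have keyN := cycleSq_keyN (t := t) ht
  -- propagation around the whole cycle
  have propagate : ∀ (P : ZMod t → Prop),
      (∀ i : ZMod t, P (f (i+1) - f i) → P (f (i+1+1) - f (i+1))) →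
      P (f (0+1) - f 0) → ∀ i : ZMod t, P (f (i+1) - f i) := by
    intro P hstep h0 i
    have hn : ∀ n : ℕ, P (f ((n : ZMod t) + 1) - f (n : ZMod t)) := by
      intro n
      induction n with
      | zero => simpa using h0
      | succ n ih =>
          have := hstep _ ih
          have hc : ((n+1 : ℕ) : ZMod t) = (n : ZMod t) + 1 := by push_cast; ring
          rw [hc]
          exact this
    have := hn i.val
    rwa [ZMod.natCast_rightInverse i] at this
  -- total sum of the steps around the cycle is zero
  have hsum : ∑ i : ZMod t, (f (i+1) - f i) = 0 := by
    rw [Finset.sum_sub_distrib, sub_eq_zero]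
    exact Fintype.sum_equiv (Equiv.addRight 1) _ _ (fun i => rfl)
  -- counting argument: with steps in {x,y}, y - x = ±3, all steps are x or all are y
  have main : ∀ x y : ZMod t, (y - x = 3 ∨ x - y = 3) →
      (∀ i : ZMod t, f (i+1) - f i = x ∨ f (i+1) - f i = y) →
      (∀ i : ZMod t, f (i+1) - f i = x) ∨ (∀ i : ZMod t, f (i+1) - f i = y) := by
    intro x y hxy hall
    have hcardle : (Finset.univ.filter (fun i => f (i+1) - f i = y)).card ≤ t := by
      simpa [ZMod.card] using
        Finset.card_le_univ (Finset.univ.filter (fun i => f (i+1) - f i = y))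
    have hsplit := Finset.sum_filter_add_sum_filter_not Finset.univ
      (fun i => f (i+1) - f i = y) (fun i => f (i+1) - f i)
    have hsB : ∑ i ∈ Finset.univ.filter (fun i => f (i+1) - f i = y), (f (i+1) - f i)
        = ((Finset.univ.filter (fun i => f (i+1) - f i = y)).card : ZMod t) * y := by
      rw [Finset.sum_congr rfl (fun i hi => (Finset.mem_filter.mp hi).2),
        Finset.sum_const, nsmul_eq_mul]
    have hcardcompl : (Finset.univ.filter (fun i => ¬ (f (i+1) - f i = y))).card
        = t - (Finset.univ.filter (fun i => f (i+1) - f i = y)).card := by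
      have h := Finset.card_filter_add_card_filter_not
        (s := (Finset.univ : Finset (ZMod t))) (p := fun i => f (i+1) - f i = y)
      simp only [Finset.card_univ, ZMod.card] at h
      omega
    have hsBc : ∑ i ∈ Finset.univ.filter (fun i => ¬ (f (i+1) - f i = y)),
        (f (i+1) - f i)
        = ((t - (Finset.univ.filter (fun i => f (i+1) - f i = y)).card : ℕ) : ZMod t)
          * x := by
      rw [Finset.sum_congr rfl (fun i hi => ?_), Finset.sum_const, hcardcompl,
        nsmul_eq_mul]
      rcases hall i with h | h
      · exact h
      · exact absurd h (Finset.mem_filter.mp hi).2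
    rw [hsB, hsBc, hsum] at hsplit
    have hcast3 :
        ((3 * (Finset.univ.filter (fun i => f (i+1) - f i = y)).card : ℕ) : ZMod t)
          = 0 := by
      have hts : ((t - (Finset.univ.filter (fun i => f (i+1) - f i = y)).card : ℕ) :
          ZMod t) = - ((Finset.univ.filter (fun i => f (i+1) - f i = y)).card :
          ZMod t) := by
        rw [Nat.cast_sub hcardle, ZMod.natCast_self]
        ring
      rw [hts] at hsplit
      push_cast
      rcases hxy with h | h
      · linear_combination
          -((Finset.univ.filter (fun i => f (i+1) - f i = y)).card : ZMod t) * h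
            + hsplit
      · linear_combination
          -((Finset.univ.filter (fun i => f (i+1) - f i = y)).card : ZMod t) * h
            - hsplit
    rw [ZMod.natCast_eq_zero_iff] at hcast3
    have hco : Nat.Coprime t 3 :=
      Nat.coprime_comm.mp ((Nat.Prime.coprime_iff_not_dvd (by norm_num)).mpr h3)
    have hdvd : t ∣ (Finset.univ.filter (fun i => f (i+1) - f i = y)).card :=
      hco.dvd_of_dvd_mul_left hcast3
    rcases Nat.eq_zero_or_pos
      (Finset.univ.filter (fun i => f (i+1) - f i = y)).card with hc0 | hcpos
    · left
      intro i
      have hiB := Finset.card_eq_zero.mp hc0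
      rcases hall i with h | h
      · exact h
      · exfalso
        have hmem : i ∈ Finset.univ.filter (fun j => f (j+1) - f j = y) :=
          Finset.mem_filter.mpr ⟨Finset.mem_univ i, h⟩
        rw [hiB] at hmem
        exact Finset.notMem_empty i hmem
    · right
      have hct : (Finset.univ.filter (fun i => f (i+1) - f i = y)).card = t :=
        le_antisymm hcardle (Nat.le_of_dvd hcpos hdvd)
      have hBuniv : (Finset.univ.filter (fun i => f (i+1) - f i = y))
          = Finset.univ := by
        apply Finset.eq_univ_of_card
        rw [hct, ZMod.card]
      intro i
      have hmem : i ∈ Finset.univ.filter (fun j => f (j+1) - f j = y) := by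
        rw [hBuniv]
        exact Finset.mem_univ i
      exact (Finset.mem_filter.mp hmem).2
  -- conclude: from the sign of the first step, all steps are 1 or all are -1
  have final : (∀ i : ZMod t, f (i+1) - f i = 1) ∨ (∀ i : ZMod t, f (i+1) - f i = -1) := by
    rcases step1 0 with h | h | h | h
    -- positive branch: steps in {1, -2}
    case inl | inr.inr.inr =>
      have hall : ∀ i : ZMod t, f (i+1) - f i = 1 ∨ f (i+1) - f i = -2 := by
        apply propagate (fun v => v = 1 ∨ v = -2)
          (fun i hi => keyP _ _ hi (step1 (i+1)) (step2 i))
        tauto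
      rcases main 1 (-2) (by right; norm_num) hall with hA | hA
      · exact Or.inl hA
      · exfalso
        have hs := step2 0
        rw [hA 0, hA (0+1)] at hs
        rcases hs with h | h | h | h
        · exact h6 (by linear_combination -h)
        · exact h4 (by linear_combination -h)
        · exact h7 (by linear_combination -h)
        · exact h2 (by linear_combination -h)
    -- negative branch: steps in {-1, 2}
    case inr.inl | inr.inr.inl =>
      have hall : ∀ i : ZMod t, f (i+1) - f i = -1 ∨ f (i+1) - f i = 2 := by
        apply propagate (fun v => v = -1 ∨ v = 2)
          (fun i hi => keyN _ _ hi (step1 (i+1)) (step2 i))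
        tauto
      rcases main (-1) 2 (by left; norm_num) hall with hA | hA
      · exact Or.inr hA
      · exfalso
        have hs := step2 0
        rw [hA 0, hA (0+1)] at hs
        rcases hs with h | h | h | h
        · exact h4 (by linear_combination h)
        · exact h6 (by linear_combination h)
        · exact h2 (by linear_combination h)
        · exact h7 (by linear_combination h)
  rcases final with hall | hall
  · -- f is the translation i ↦ f 0 + i
    have hf : ∀ i : ZMod t, f i = f 0 + i := by
      intro i
      have hn : ∀ n : ℕ, f ((n : ZMod t)) = f 0 + (n : ZMod t) := by
        intro n
        induction n with
        | zero => simp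
        | succ n ih =>
            have hc : ((n+1 : ℕ) : ZMod t) = (n : ZMod t) + 1 := by push_cast; ring
            rw [hc]
            linear_combination ih + hall (n : ZMod t)
      have := hn i.val
      rwa [ZMod.natCast_rightInverse i] at this
    have hval : ⇑f = fun i => f 0 + i := funext hf
    rw [hval]
    exact (Equiv.addLeft (f 0)).bijective
  · -- f is the reflection i ↦ f 0 - i
    have hf : ∀ i : ZMod t, f i = f 0 - i := by
      intro i
      have hn : ∀ n : ℕ, f ((n : ZMod t)) = f 0 - (n : ZMod t) := by
        intro n
        induction n with
        | zero => simp
        | succ n ih =>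
            have hc : ((n+1 : ℕ) : ZMod t) = (n : ZMod t) + 1 := by push_cast; ring
            rw [hc]
            linear_combination ih + hall (n : ZMod t)
      have := hn i.val
      rwa [ZMod.natCast_rightInverse i] at this
    have hval : ⇑f = fun i => f 0 - i := funext hf
    rw [hval]
    exact (Equiv.subLeft (f 0)).bijective
end

section
/- For t ≥ 2, the shortest odd cycle in the circular clique K_{4t/(2t-1)} has length 2t+1. -/
/-- The circular clique `K_{4t/(2t-1)}` on `ZMod (4*t)`: `i ~ j` iff they differ by
`±(2t-1)`, `±2t` or `±(2t+1)` (mod `4t`). -/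
def circK (t : ℕ) : SimpleGraph (ZMod (4 * t)) where
  Adj i j := i ≠ j ∧
    (j - i = ((2 * t - 1 : ℕ) : ZMod (4 * t)) ∨ i - j = ((2 * t - 1 : ℕ) : ZMod (4 * t)) ∨
     j - i = ((2 * t : ℕ) : ZMod (4 * t)) ∨ i - j = ((2 * t : ℕ) : ZMod (4 * t)) ∨
     j - i = ((2 * t + 1 : ℕ) : ZMod (4 * t)) ∨ i - j = ((2 * t + 1 : ℕ) : ZMod (4 * t)))
  symm := by
    constructor
    intro i j h
    exact ⟨h.1.symm, by tauto⟩
  loopless := by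
    constructor
    intro i h
    exact h.1 rfl


lemma four_t_zero (t : ℕ) : ((4 * t : ℕ) : ZMod (4 * t)) = 0 := ZMod.natCast_self _

lemma cast_sub_one (t : ℕ) (ht : 2 ≤ t) :
    ((2 * t - 1 : ℕ) : ZMod (4 * t)) = ((2 * t : ℕ) : ZMod (4 * t)) - 1 := by
  rw [Nat.cast_sub (by omega : 1 ≤ 2 * t), Nat.cast_one]

/-- each edge corresponds to an integer step `d ∈ [2t-1, 2t+1]`. -/
lemma step_of_adj (t : ℕ) (ht : 2 ≤ t) {i j : ZMod (4 * t)} (h : (circK t).Adj i j) :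
    ∃ d : ℤ, (2 * t - 1 ≤ d ∧ d ≤ 2 * t + 1) ∧ ((d : ZMod (4 * t)) = j - i) := by
  have h4 : ((4 * t : ℕ) : ZMod (4 * t)) = 0 := four_t_zero t
  push_cast at h4
  obtain ⟨-, hc⟩ := h
  rcases hc with hc | hc | hc | hc | hc | hc
  · refine ⟨2 * t - 1, ⟨le_refl _, by omega⟩, ?_⟩
    rw [hc, cast_sub_one t ht]; push_cast; ring
  · refine ⟨2 * t + 1, ⟨by omega, le_refl _⟩, ?_⟩
    have hji : j - i = -(i - j) := by ring
    rw [hji, hc, cast_sub_one t ht]; push_cast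
    linear_combination h4
  · refine ⟨2 * t, ⟨by omega, by omega⟩, ?_⟩
    rw [hc]; push_cast; ring
  · refine ⟨2 * t, ⟨by omega, by omega⟩, ?_⟩
    have hji : j - i = -(i - j) := by ring
    rw [hji, hc]; push_cast
    linear_combination h4
  · refine ⟨2 * t + 1, ⟨by omega, le_refl _⟩, ?_⟩
    rw [hc]; push_cast; ring
  · refine ⟨2 * t - 1, ⟨le_refl _, by omega⟩, ?_⟩
    have hji : j - i = -(i - j) := by ring
    rw [hji, hc]; push_cast
    linear_combination h4

lemma walk_bound (t : ℕ) (ht : 2 ≤ t) {u v : ZMod (4 * t)} (w : (circK t).Walk u v) :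
    ∃ s : ℤ, ((s : ZMod (4 * t)) = v - u) ∧
      (2 * t - 1 : ℤ) * w.length ≤ s ∧ s ≤ (2 * t + 1 : ℤ) * w.length := by
  induction w with
  | nil => exact ⟨0, by simp, by simp, by simp⟩
  | @cons a b c h p ih =>
    obtain ⟨s, hs, hs1, hs2⟩ := ih
    obtain ⟨d, ⟨hd1, hd2⟩, hd⟩ := step_of_adj t ht h
    refine ⟨d + s, ?_, ?_, ?_⟩
    · push_cast
      rw [hd, hs]; ring
    · simp only [SimpleGraph.Walk.length_cons]
      push_cast
      nlinarith [hs1]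
    · simp only [SimpleGraph.Walk.length_cons]
      push_cast
      nlinarith [hs2]

/-- lower bound for odd closed walks. -/
lemma odd_closed_walk_bound (t : ℕ) (ht : 2 ≤ t) {v : ZMod (4 * t)} (w : (circK t).Walk v v)
    (hodd : Odd w.length) : 2 * t + 1 ≤ w.length := by
  obtain ⟨s, hs, hs1, hs2⟩ := walk_bound t ht w
  rw [sub_self] at hs
  haveI : NeZero (4 * t) := ⟨by omega⟩
  obtain ⟨m, hm⟩ := (ZMod.intCast_zmod_eq_zero_iff_dvd s (4 * t)).mp hs
  set L : ℤ := (w.length : ℤ) with hL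
  obtain ⟨k, hk⟩ := hodd
  have hkL : L = 2 * k + 1 := by rw [hL, hk]; push_cast; ring
  have he : s - 2 * t * L = 2 * t * (2 * m - L) := by
    rw [hm]; push_cast; ring
  have hne : 2 * m - L ≠ 0 := by omega
  have htpos : (1 : ℤ) ≤ t := by exact_mod_cast Nat.one_le_of_lt ht
  have hge : 2 * (t : ℤ) ≤ L := by
    rcases lt_or_gt_of_ne hne with hlt | hgt
    · have h1 : 2 * m - L ≤ -1 := by omega
      nlinarith
    · have h1 : 1 ≤ 2 * m - L := by omega
      nlinarith
  have h2 : ((2 * t : ℕ) : ℤ) ≤ (w.length : ℤ) := by push_cast; linarith [hge]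
  have : 2 * t ≤ w.length := by exact_mod_cast h2
  omega

def fV (t : ℕ) (i : ℕ) : ZMod (4 * t) := ((i * (2 * t + 1) : ℕ) : ZMod (4 * t))

lemma coprime_step (t : ℕ) : Nat.Coprime (2 * t + 1) (4 * t) := by
  have c2 : Nat.Coprime (2 * t + 1) 2 := Odd.coprime_two_right ⟨t, by ring⟩
  have ct : Nat.Coprime (2 * t + 1) t := by
    rw [show 2 * t + 1 = 1 + t * 2 by ring]
    exact (Nat.coprime_add_mul_left_left 1 t 2).mpr (Nat.coprime_one_left t)
  have h := c2.mul_right (c2.mul_right ct)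
  rwa [show 2 * (2 * t) = 4 * t by ring] at h

lemma fV_inj (t : ℕ) {i j : ℕ} (hi : i < 4 * t) (hj : j < 4 * t) (h : fV t i = fV t j) :
    i = j := by
  unfold fV at h
  rw [ZMod.natCast_eq_natCast_iff] at h
  have := Nat.ModEq.cancel_right_of_coprime (coprime_step t).symm h
  have h' : i % (4 * t) = j % (4 * t) := this
  rwa [Nat.mod_eq_of_lt hi, Nat.mod_eq_of_lt hj] at h'

lemma adj_step (t : ℕ) (ht : 2 ≤ t) (k : ℕ) :
    (circK t).Adj (fV t (k + 1)) (fV t k) := by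
  haveI : NeZero (4 * t) := ⟨by omega⟩
  constructor
  · intro h
    have hz : ((2 * t + 1 : ℕ) : ZMod (4 * t)) = 0 := by
      have hd : fV t (k + 1) - fV t k = ((2 * t + 1 : ℕ) : ZMod (4 * t)) := by
        unfold fV; push_cast; ring
      rw [← hd, h, sub_self]
    rw [ZMod.natCast_eq_zero_iff] at hz
    have := Nat.le_of_dvd (by omega) hz
    omega
  · refine Or.inr (Or.inr (Or.inr (Or.inr (Or.inr ?_))))
    unfold fV
    push_cast
    ring

def pathP (t : ℕ) (ht : 2 ≤ t) : (k : ℕ) → (circK t).Walk (fV t k) 0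
  | 0 => SimpleGraph.Walk.nil.copy (by simp [fV]) rfl
  | (k + 1) => SimpleGraph.Walk.cons (adj_step t ht k) (pathP t ht k)

lemma pathP_length (t : ℕ) (ht : 2 ≤ t) :
    ∀ (k : ℕ), (pathP t ht k).length = k
  | 0 => by simp [pathP]
  | (k + 1) => by
      simp only [pathP, SimpleGraph.Walk.length_cons]
      rw [pathP_length t ht k]

lemma pathP_support (t : ℕ) (ht : 2 ≤ t) :
    ∀ (k : ℕ),
      (pathP t ht k).support = ((List.range (k + 1)).reverse).map (fV t)
  | 0 => by
      simp only [pathP, SimpleGraph.Walk.support_copy, SimpleGraph.Walk.support_nil]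
      rw [show List.range 1 = [0] from rfl]
      simp [fV]
  | (k + 1) => by
      simp only [pathP, SimpleGraph.Walk.support_cons]
      rw [pathP_support t ht k]
      simp [List.range_succ]

lemma pathP_edges (t : ℕ) (ht : 2 ≤ t) :
    ∀ (k : ℕ),
      (pathP t ht k).edges = ((List.range k).reverse).map (fun i => s(fV t (i + 1), fV t i))
  | 0 => by simp [pathP]
  | (k + 1) => by
      simp only [pathP, SimpleGraph.Walk.edges_cons]
      rw [pathP_edges t ht k, List.range_succ]
      simp

lemma pathP_isPath (t : ℕ) (ht : 2 ≤ t) (k : ℕ) (hk : k ≤ 2 * t) :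
    (pathP t ht k).IsPath := by
  rw [SimpleGraph.Walk.isPath_def, pathP_support t ht k]
  refine List.Nodup.map_on ?_ (by simp [List.nodup_range])
  intro x hx y hy hxy
  simp only [List.mem_reverse, List.mem_range] at hx hy
  exact fV_inj t (by omega) (by omega) hxy

lemma adj_back (t : ℕ) (ht : 2 ≤ t) : (circK t).Adj 0 (fV t (2 * t)) := by
  have h4 : ((4 * t : ℕ) : ZMod (4 * t)) = 0 := four_t_zero t
  push_cast at h4
  constructor
  · intro h
    have h0 : fV t 0 = fV t (2 * t) := by
      rw [show fV t 0 = 0 by simp [fV]]; exact h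
    have := fV_inj t (by omega) (by omega) h0
    omega
  · refine Or.inr (Or.inr (Or.inl ?_))
    unfold fV
    push_cast
    linear_combination (t : ZMod (4 * t)) * h4

/-- For `t ≥ 2`, the shortest odd cycle of `K_{4t/(2t-1)}` has length `2t+1`:
there is an (odd) cycle of length `2t+1`, and every odd cycle has length at least `2t+1`. -/
theorem stmt5 (t : ℕ) (ht : 2 ≤ t) :
    (∃ (v : ZMod (4 * t)) (w : (circK t).Walk v v), w.IsCycle ∧ w.length = 2 * t + 1) ∧
    (∀ (v : ZMod (4 * t)) (w : (circK t).Walk v v), w.IsCycle → Odd w.length →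
      2 * t + 1 ≤ w.length) := by
  constructor
  · refine ⟨0, SimpleGraph.Walk.cons (adj_back t ht) (pathP t ht (2 * t)), ?_, ?_⟩
    · rw [SimpleGraph.Walk.cons_isCycle_iff]
      refine ⟨pathP_isPath t ht (2 * t) le_rfl, ?_⟩
      rw [pathP_edges t ht (2 * t)]
      intro hmem
      simp only [List.mem_map, List.mem_reverse, List.mem_range] at hmem
      obtain ⟨i, hi, heq⟩ := hmem
      rw [Sym2.eq_iff] at heq
      have h00 : fV t 0 = 0 := by simp [fV]
      rcases heq with ⟨h1, h2⟩ | ⟨h1, h2⟩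
      · have := fV_inj t (by omega) (by omega) (h1.trans h00.symm)
        omega
      · have hi0 := fV_inj t (by omega) (by omega) (h2.trans h00.symm)
        subst hi0
        have := fV_inj t (by omega) (by omega) h1
        omega
    · simp only [SimpleGraph.Walk.length_cons]
      rw [pathP_length t ht (2 * t)]
  · intro v w _ hodd
    exact odd_closed_walk_bound t ht w hodd
end

section
/- Let t ≥ 2 and let f be a graph homomorphism from the cycle C_{2t+1} to the circular clique K_{4t/(2t-1)}. Then f is injective; moreover, if i and j are two vertices of C_{2t+1} at distance 2 with f(i) = k_a, then f(j) ∈ {k_{a-2}, k_{a-1}, k_{a+1}, k_{a+2}} (indices mod 4t). -/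
/-- The cycle graph `C_n` on `ZMod n`. -/
def cycleG (n : ℕ) : SimpleGraph (ZMod n) where
  Adj i j := i ≠ j ∧ (j - i = 1 ∨ i - j = 1)
  symm := by
    constructor
    intro i j h
    exact ⟨h.1.symm, by tauto⟩
  loopless := by
    constructor
    intro i h
    exact h.1 rfl

private lemma windowAux (t : ℕ) (ε : ZMod (2*t+1) → ℤ)
    (hb : ∀ x, ε x ≤ 1)
    (hsum : ∀ i : ZMod (2*t+1),
      ∑ m ∈ Finset.range (2*t+1), ε (i + (m : ZMod (2*t+1))) = 2*(t:ℤ))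
    (i : ZMod (2*t+1)) (k : ℕ) (hk : k ≤ 2*t+1) :
    (k:ℤ) - 1 ≤ ∑ m ∈ Finset.range k, ε (i + (m : ZMod (2*t+1))) ∧
      ∑ m ∈ Finset.range k, ε (i + (m : ZMod (2*t+1))) ≤ (k:ℤ) := by
  have hup : ∀ a b : ℕ, ∑ m ∈ Finset.Ico a b, ε (i + (m : ZMod (2*t+1))) ≤ ((b - a : ℕ) : ℤ) := by
    intro a b
    calc ∑ m ∈ Finset.Ico a b, ε (i + (m : ZMod (2*t+1)))
        ≤ ∑ _m ∈ Finset.Ico a b, (1:ℤ) := Finset.sum_le_sum (fun m _ => hb _)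
      _ = ((b - a : ℕ) : ℤ) := by simp
  constructor
  · have hsplit : ∑ m ∈ Finset.range k, ε (i + (m : ZMod (2*t+1)))
        + ∑ m ∈ Finset.Ico k (2*t+1), ε (i + (m : ZMod (2*t+1)))
        = ∑ m ∈ Finset.range (2*t+1), ε (i + (m : ZMod (2*t+1))) := by
      rw [Finset.range_eq_Ico, Finset.range_eq_Ico]
      exact Finset.sum_Ico_consecutive (fun m : ℕ => ε (i + (m : ZMod (2*t+1)))) (Nat.zero_le _) hk
    have h1 := hup k (2*t+1)
    have h2 : ((2*t+1 - k : ℕ) : ℤ) = 2*(t:ℤ) + 1 - k := by omega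
    rw [hsum i] at hsplit
    rw [h2] at h1
    linarith
  · have h1 := hup 0 k
    have h2 : ((k - 0 : ℕ) : ℤ) = (k:ℤ) := by omega
    rw [h2] at h1
    rw [Finset.range_eq_Ico]
    exact h1

private lemma ndvdAux (t : ℕ) (ht : 2 ≤ t) (k : ℕ) (S : ℤ) (hk1 : 1 ≤ k) (hk2 : k ≤ 2*t)
    (hS1 : (k:ℤ) - 1 ≤ S) (hS2 : S ≤ (k:ℤ)) : ¬ (4*(t:ℤ)) ∣ (2*(t:ℤ)*k + S) := by
  rintro ⟨c, hc⟩
  have htz : (2:ℤ) ≤ (t:ℤ) := by exact_mod_cast ht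
  have hkz1 : (1:ℤ) ≤ (k:ℤ) := by exact_mod_cast hk1
  have hkz2 : (k:ℤ) ≤ 2*(t:ℤ) := by exact_mod_cast hk2
  obtain ⟨s, hs⟩ : (2*(t:ℤ)) ∣ S := ⟨2*c - k, by linear_combination hc⟩
  have h0 : 0 ≤ S := by linarith
  have h1 : S ≤ 2*(t:ℤ) := by linarith
  have hs01 : s = 0 ∨ s = 1 := by
    by_contra hcon
    push_neg at hcon
    rcases lt_or_ge s 0 with h | h
    · have hmul : 2*(t:ℤ)*s ≤ 2*(t:ℤ)*(-1) := mul_le_mul_of_nonneg_left (by omega) (by linarith)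
      linarith
    · have hs2 : (2:ℤ) ≤ s := by omega
      have hmul : 2*(t:ℤ)*2 ≤ 2*(t:ℤ)*s := mul_le_mul_of_nonneg_left hs2 (by linarith)
      linarith
  rcases hs01 with h | h
  · have hS0 : S = 0 := by rw [h, mul_zero] at hs; exact hs
    have hk1' : (k:ℤ) = 1 := by linarith
    rw [hS0, hk1'] at hc
    have hcc : (2*(t:ℤ)) * 1 = 2*(t:ℤ) * (2*c) := by linear_combination hc
    have h2 : (1:ℤ) = 2*c := mul_left_cancel₀ (by linarith) hcc
    omega
  · have hS0 : S = 2*(t:ℤ) := by rw [h, mul_one] at hs; exact hs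
    have hk2' : (k:ℤ) = 2*(t:ℤ) := by linarith
    rw [hS0, hk2'] at hc
    have hcc : (2*(t:ℤ)) * (2*(t:ℤ)+1) = 2*(t:ℤ) * (2*c) := by linear_combination hc
    have h2 : (2*(t:ℤ)+1) = 2*c := mul_left_cancel₀ (by linarith) hcc
    omega

/-- For `t ≥ 2`, every homomorphism `C_{2t+1} → K_{4t/(2t-1)}` is injective, and it maps
any two vertices at distance 2 in the cycle to vertices whose indices differ by
`±1` or `±2` (mod `4t`). -/
theorem stmt6 (t : ℕ) (ht : 2 ≤ t) (f : cycleG (2 * t + 1) →g circK t) :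
    Function.Injective f ∧
    ∀ i j : ZMod (2 * t + 1), (j - i = 2 ∨ i - j = 2) →
      (f j - f i = 1 ∨ f i - f j = 1 ∨ f j - f i = 2 ∨ f i - f j = 2) := by
  haveI hn1 : NeZero (2*t+1) := ⟨by omega⟩
  haveI hn2 : NeZero (4*t) := ⟨by omega⟩
  -- cast helpers
  have c4 : 4*((t:ℕ) : ZMod (4*t)) = 0 := by
    have h := ZMod.natCast_self (4*t)
    push_cast at h
    linear_combination h
  have c1 : ((2*t-1 : ℕ) : ZMod (4*t)) = 2*((t:ℕ) : ZMod (4*t)) - 1 := by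
    have h : (2*t - 1 : ℕ) + 1 = 2*t := by omega
    have h2 := congrArg (fun m : ℕ => (m : ZMod (4*t))) h
    push_cast at h2
    linear_combination h2
  have c2 : ((2*t : ℕ) : ZMod (4*t)) = 2*((t:ℕ) : ZMod (4*t)) := by push_cast; ring
  have c3 : ((2*t+1 : ℕ) : ZMod (4*t)) = 2*((t:ℕ) : ZMod (4*t)) + 1 := by push_cast; ring
  -- adjacency along the cycle
  have hadj : ∀ x : ZMod (2*t+1), (cycleG (2*t+1)).Adj x (x+1) := by
    intro x
    refine ⟨?_, Or.inl (by ring)⟩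
    intro h
    have h1 : ((1:ℕ) : ZMod (2*t+1)) = 0 := by push_cast; linear_combination -h
    have h2 := (ZMod.natCast_eq_zero_iff 1 (2*t+1)).mp h1
    have h3 := Nat.le_of_dvd one_pos h2
    omega
  -- the epsilon sequence
  have hD : ∀ x : ZMod (2*t+1), ∃ e : ℤ, (-1 ≤ e ∧ e ≤ 1) ∧
      f (x+1) - f x = ((2*(t:ℤ) + e : ℤ) : ZMod (4*t)) := by
    intro x
    obtain ⟨-, h⟩ := f.map_adj (hadj x)
    rw [c1, c2, c3] at h
    rcases h with h|h|h|h|h|h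
    · exact ⟨-1, ⟨le_refl _, by norm_num⟩, by push_cast; linear_combination h⟩
    · exact ⟨1, ⟨by norm_num, le_refl _⟩, by push_cast; linear_combination -h - c4⟩
    · exact ⟨0, ⟨by norm_num, by norm_num⟩, by push_cast; linear_combination h⟩
    · exact ⟨0, ⟨by norm_num, by norm_num⟩, by push_cast; linear_combination -h - c4⟩
    · exact ⟨1, ⟨by norm_num, le_refl _⟩, by push_cast; linear_combination h⟩
    · exact ⟨-1, ⟨le_refl _, by norm_num⟩, by push_cast; linear_combination -h - c4⟩
  choose ε hεb hεD using hD
  -- telescoping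
  have tel : ∀ (i : ZMod (2*t+1)) (k : ℕ),
      f (i + (k : ZMod (2*t+1))) - f i
        = ((2*(t:ℤ)*k + ∑ m ∈ Finset.range k, ε (i + (m : ZMod (2*t+1))) : ℤ) : ZMod (4*t)) := by
    intro i k
    induction k with
    | zero => simp
    | succ k ih =>
      have hcast : (((k+1:ℕ)) : ZMod (2*t+1)) = (k : ZMod (2*t+1)) + 1 := by push_cast; ring
      rw [hcast, ← add_assoc, Finset.sum_range_succ]
      have hd := hεD (i + (k : ZMod (2*t+1)))
      push_cast
      push_cast at ih hd
      linear_combination ih + hd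
  -- total sums
  set E : ZMod (2*t+1) → ℤ :=
    fun i => ∑ m ∈ Finset.range (2*t+1), ε (i + (m : ZMod (2*t+1))) with hEdef
  have hdvd : ∀ i : ZMod (2*t+1), (4*(t:ℤ)) ∣ (2*(t:ℤ) + E i) := by
    intro i
    have h0 := tel i (2*t+1)
    rw [ZMod.natCast_self, add_zero, sub_self] at h0
    have h1 : ((2*(t:ℤ)*((2*t+1:ℕ):ℤ) + E i : ℤ) : ZMod (4*t)) = 0 := h0.symm
    have h2 := (ZMod.intCast_zmod_eq_zero_iff_dvd _ (4*t)).mp h1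
    obtain ⟨c, hc⟩ := h2
    refine ⟨c - t, ?_⟩
    push_cast at hc ⊢
    linear_combination hc
  have hcard : ∑ _m ∈ Finset.range (2*t+1), (1:ℤ) = 2*(t:ℤ)+1 := by
    rw [Finset.sum_const, Finset.card_range]
    ring
  have hEb : ∀ i, -(2*(t:ℤ)+1) ≤ E i ∧ E i ≤ 2*(t:ℤ)+1 := by
    intro i
    constructor
    · have h1 : ∑ _m ∈ Finset.range (2*t+1), (-1:ℤ) ≤ E i :=
        Finset.sum_le_sum (fun m _ => (hεb _).1)
      have h2 : ∑ _m ∈ Finset.range (2*t+1), (-1:ℤ) = -(2*(t:ℤ)+1) := by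
        rw [Finset.sum_const, Finset.card_range]
        ring
      linarith
    · have h1 : E i ≤ ∑ _m ∈ Finset.range (2*t+1), (1:ℤ) :=
        Finset.sum_le_sum (fun m _ => (hεb _).2)
      linarith
  have htz : (2:ℤ) ≤ (t:ℤ) := by exact_mod_cast ht
  have hEval : ∀ i, E i = 2*(t:ℤ) ∨ E i = -(2*(t:ℤ)) := by
    intro i
    obtain ⟨c, hc⟩ := hdvd i
    have hb1 := (hEb i).1
    have hb2 := (hEb i).2
    have hc01 : c = 0 ∨ c = 1 := by
      by_contra hcon
      push_neg at hcon
      rcases lt_or_ge c 0 with h | h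
      · have hmul : 4*(t:ℤ)*c ≤ 4*(t:ℤ)*(-1) := mul_le_mul_of_nonneg_left (by omega) (by linarith)
        linarith
      · have h2c : (2:ℤ) ≤ c := by omega
        have hmul : 4*(t:ℤ)*2 ≤ 4*(t:ℤ)*c := mul_le_mul_of_nonneg_left h2c (by linarith)
        linarith
    rcases hc01 with h | h
    · right; rw [h, mul_zero] at hc; linarith
    · left; rw [h, mul_one] at hc; linarith
  -- sign determination helper
  have signAux : ∀ δ : ZMod (2*t+1) → ℤ, (∀ x, δ x ≤ 1) →
      (∑ m ∈ Finset.range (2*t+1), δ ((0 : ZMod (2*t+1)) + (m : ZMod (2*t+1))) = 2*(t:ℤ)) →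
      ∀ x, 0 ≤ δ x := by
    intro δ hδ h0 x
    have hx : ((x.val : ℕ) : ZMod (2*t+1)) = x := ZMod.natCast_zmod_val x
    have hxlt : x.val < 2*t+1 := ZMod.val_lt x
    have key : ∀ m ∈ Finset.range (2*t+1),
        (0:ℤ) ≤ 1 - δ ((0 : ZMod (2*t+1)) + (m : ZMod (2*t+1))) :=
      fun m _ => by linarith [hδ ((0 : ZMod (2*t+1)) + (m : ZMod (2*t+1)))]
    have hsum1 : ∑ m ∈ Finset.range (2*t+1),
        ((1:ℤ) - δ ((0 : ZMod (2*t+1)) + (m : ZMod (2*t+1)))) = 1 := by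
      rw [Finset.sum_sub_distrib, h0, hcard]
      ring
    have hle := Finset.single_le_sum key (Finset.mem_range.mpr hxlt)
    rw [hsum1, zero_add, hx] at hle
    linarith
  -- main case split
  rcases hEval 0 with hpos | hneg
  · -- positive case
    have hnn : ∀ x, 0 ≤ ε x := signAux ε (fun x => (hεb x).2) hpos
    have hEpos : ∀ i, E i = 2*(t:ℤ) := by
      intro i
      rcases hEval i with h | h
      · exact h
      · exfalso
        have h0 : 0 ≤ E i := Finset.sum_nonneg (fun m _ => hnn _)
        linarith
    have hwin := windowAux t ε (fun x => (hεb x).2) hEpos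
    constructor
    · intro i j hfij
      by_contra hne
      have hk0 : (j - i).val ≠ 0 := by
        intro h0
        exact hne (sub_eq_zero.mp ((ZMod.val_eq_zero _).mp h0)).symm
      have hklt : (j - i).val < 2*t+1 := ZMod.val_lt _
      have hjk : j = i + (((j - i).val : ℕ) : ZMod (2*t+1)) := by
        rw [ZMod.natCast_zmod_val]; ring
      have h0 := tel i (j - i).val
      rw [← hjk, ← hfij, sub_self] at h0
      have h1 := (ZMod.intCast_zmod_eq_zero_iff_dvd _ (4*t)).mp h0.symm
      have hS := hwin i (j - i).val (by omega)
      refine ndvdAux t ht (j - i).val _ (by omega) (by omega) hS.1 hS.2 ?_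
      obtain ⟨c, hc⟩ := h1
      exact ⟨c, by push_cast at hc ⊢; linear_combination hc⟩
    · intro i j hij
      rcases hij with hij | hij
      · have hS := hwin i 2 (by omega)
        have hj : j = i + (((2:ℕ)) : ZMod (2*t+1)) := by push_cast; linear_combination hij
        have h0 := tel i 2
        rw [← hj] at h0
        have hS12 : (∑ m ∈ Finset.range 2, ε (i + (m : ZMod (2*t+1)))) = 1 ∨
            (∑ m ∈ Finset.range 2, ε (i + (m : ZMod (2*t+1)))) = 2 := by omega
        rcases hS12 with h | h
        · left
          rw [h0, h]
          push_cast
          linear_combination c4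
        · right; right; left
          rw [h0, h]
          push_cast
          linear_combination c4
      · have hS := hwin j 2 (by omega)
        have hj : i = j + (((2:ℕ)) : ZMod (2*t+1)) := by push_cast; linear_combination hij
        have h0 := tel j 2
        rw [← hj] at h0
        have hS12 : (∑ m ∈ Finset.range 2, ε (j + (m : ZMod (2*t+1)))) = 1 ∨
            (∑ m ∈ Finset.range 2, ε (j + (m : ZMod (2*t+1)))) = 2 := by omega
        rcases hS12 with h | h
        · right; left
          rw [h0, h]
          push_cast
          linear_combination c4
        · right; right; right
          rw [h0, h]
          push_cast
          linear_combination c4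
  · -- negative case
    have hsum' : ∑ m ∈ Finset.range (2*t+1),
        (-ε ((0 : ZMod (2*t+1)) + (m : ZMod (2*t+1)))) = 2*(t:ℤ) := by
      rw [Finset.sum_neg_distrib]
      have hE0 : (∑ m ∈ Finset.range (2*t+1), ε ((0 : ZMod (2*t+1)) + (m : ZMod (2*t+1)))) = E 0 := rfl
      rw [hE0, hneg]
      ring
    have hnn : ∀ x, ε x ≤ 0 := by
      intro x
      have h := signAux (fun x => -ε x) (fun x => by linarith [(hεb x).1]) hsum' x
      simp at h
      linarith
    have hEneg : ∀ i : ZMod (2*t+1), ∑ m ∈ Finset.range (2*t+1),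
        (-ε (i + (m : ZMod (2*t+1)))) = 2*(t:ℤ) := by
      intro i
      rcases hEval i with h | h
      · exfalso
        have h0 : E i ≤ 0 := Finset.sum_nonpos (fun m _ => hnn _)
        linarith
      · rw [Finset.sum_neg_distrib]
        have hE0 : (∑ m ∈ Finset.range (2*t+1), ε (i + (m : ZMod (2*t+1)))) = E i := rfl
        rw [hE0, h]
        ring
    have hwin : ∀ (i : ZMod (2*t+1)) (k : ℕ), k ≤ 2*t+1 →
        (k:ℤ) - 1 ≤ -(∑ m ∈ Finset.range k, ε (i + (m : ZMod (2*t+1)))) ∧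
          -(∑ m ∈ Finset.range k, ε (i + (m : ZMod (2*t+1)))) ≤ (k:ℤ) := by
      intro i k hk
      have h := windowAux t (fun x => -ε x) (fun x => by linarith [(hεb x).1]) hEneg i k hk
      simpa [Finset.sum_neg_distrib] using h
    constructor
    · intro i j hfij
      by_contra hne
      have hk0 : (j - i).val ≠ 0 := by
        intro h0
        exact hne (sub_eq_zero.mp ((ZMod.val_eq_zero _).mp h0)).symm
      have hklt : (j - i).val < 2*t+1 := ZMod.val_lt _
      have hjk : j = i + (((j - i).val : ℕ) : ZMod (2*t+1)) := by
        rw [ZMod.natCast_zmod_val]; ring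
      have h0 := tel i (j - i).val
      rw [← hjk, ← hfij, sub_self] at h0
      have h1 := (ZMod.intCast_zmod_eq_zero_iff_dvd _ (4*t)).mp h0.symm
      have hS := hwin i (j - i).val (by omega)
      refine ndvdAux t ht (j - i).val _ (by omega) (by omega) hS.1 hS.2 ?_
      obtain ⟨c, hc⟩ := h1
      refine ⟨((j - i).val : ℤ) - c, ?_⟩
      push_cast at hc ⊢
      linear_combination -hc
    · intro i j hij
      rcases hij with hij | hij
      · have hS := hwin i 2 (by omega)
        have hj : j = i + (((2:ℕ)) : ZMod (2*t+1)) := by push_cast; linear_combination hij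
        have h0 := tel i 2
        rw [← hj] at h0
        have hS12 : (∑ m ∈ Finset.range 2, ε (i + (m : ZMod (2*t+1)))) = -1 ∨
            (∑ m ∈ Finset.range 2, ε (i + (m : ZMod (2*t+1)))) = -2 := by omega
        have h0' : f i - f j
            = -(((2*(t:ℤ)*((2:ℕ):ℤ) + ∑ m ∈ Finset.range 2, ε (i + (m : ZMod (2*t+1))) : ℤ) : ZMod (4*t))) := by
          rw [← h0]; ring
        rcases hS12 with h | h
        · right; left
          rw [h0', h]
          push_cast
          linear_combination -c4
        · right; right; right
          rw [h0', h]
          push_cast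
          linear_combination -c4
      · have hS := hwin j 2 (by omega)
        have hj : i = j + (((2:ℕ)) : ZMod (2*t+1)) := by push_cast; linear_combination hij
        have h0 := tel j 2
        rw [← hj] at h0
        have hS12 : (∑ m ∈ Finset.range 2, ε (j + (m : ZMod (2*t+1)))) = -1 ∨
            (∑ m ∈ Finset.range 2, ε (j + (m : ZMod (2*t+1)))) = -2 := by omega
        have h0' : f j - f i
            = -(((2*(t:ℤ)*((2:ℕ):ℤ) + ∑ m ∈ Finset.range 2, ε (j + (m : ZMod (2*t+1))) : ℤ) : ZMod (4*t))) := by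
          rw [← h0]; ring
        rcases hS12 with h | h
        · left
          rw [h0', h]
          push_cast
          linear_combination -c4
        · right; right; left
          rw [h0', h]
          push_cast
          linear_combination -c4
end

section
/- The graph on vertex set Z_{4t} (t ≥ 2) in which i is adjacent to j if and only if i - j ≡ ±1 or ±2 (mod 4t) is isomorphic to the square of the cycle C_{4t}; equivalently, applying to K_{4t/(2t-1)} the indicator that joins u and v whenever there is a homomorphism of C_{2t+1} mapping two fixed distance-2 vertices to u and v yields a graph isomorphic to C_{4t}^2. -/
section Aux

variable {t : ℕ}

private lemma castBB (ht : 2 ≤ t) :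
    ((2*t:ℕ) : ZMod (4*t)) + ((2*t:ℕ) : ZMod (4*t)) = 0 := by
  rw [← Nat.cast_add]
  have h : 2*t+2*t = 4*t := by ring
  rw [h, ZMod.natCast_self]

private lemma cast_ne_zero (ht : 2 ≤ t) {a : ℕ} (h1 : 0 < a) (h2 : a < 4*t) :
    ((a:ℕ) : ZMod (4*t)) ≠ 0 := by
  rw [Ne, ZMod.natCast_eq_zero_iff]
  intro h
  have := Nat.eq_zero_of_dvd_of_lt h h2
  omega

private lemma circK_adj (ht : 2 ≤ t) {i j : ZMod (4*t)} :
    (circK t).Adj i j ↔ i ≠ j ∧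
      (j - i = ((2*t:ℕ) : ZMod (4*t)) - 1 ∨ j - i = ((2*t:ℕ) : ZMod (4*t)) ∨
       j - i = ((2*t:ℕ) : ZMod (4*t)) + 1) := by
  have hA : ((2*t-1:ℕ) : ZMod (4*t)) = ((2*t:ℕ) : ZMod (4*t)) - 1 := by
    rw [Nat.cast_sub (by omega)]; simp
  have hC : ((2*t+1:ℕ) : ZMod (4*t)) = ((2*t:ℕ) : ZMod (4*t)) + 1 := by
    push_cast; ring
  have hBB := castBB ht
  constructor
  · rintro ⟨hne, h⟩
    refine ⟨hne, ?_⟩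
    rw [hA, hC] at h
    rcases h with h|h|h|h|h|h
    · exact Or.inl h
    · exact Or.inr (Or.inr (by linear_combination -h - hBB))
    · exact Or.inr (Or.inl h)
    · exact Or.inr (Or.inl (by linear_combination -h - hBB))
    · exact Or.inr (Or.inr h)
    · exact Or.inl (by linear_combination -h - hBB)
  · rintro ⟨hne, h⟩
    refine ⟨hne, ?_⟩
    rw [hA, hC]
    rcases h with h|h|h
    · exact Or.inl h
    · exact Or.inr (Or.inr (Or.inl h))
    · exact Or.inr (Or.inr (Or.inr (Or.inr (Or.inl h))))

private lemma hMB (ht : 2 ≤ t) :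
    ((2*t+1:ℕ) : ZMod (4*t)) * ((2*t:ℕ) : ZMod (4*t)) = ((2*t:ℕ) : ZMod (4*t)) := by
  rw [← Nat.cast_mul]
  have h : (2*t+1) * (2*t) = t * (4*t) + 2*t := by ring
  rw [h, Nat.cast_add, Nat.cast_mul, ZMod.natCast_self, mul_zero, zero_add]

/-- Forward direction: any homomorphism of the odd cycle into `circK t`
sends the distance-2 pair `(0,2)` to a `cycleSq`-edge. -/
private lemma forward (ht : 2 ≤ t) (f : cycleG (2*t+1) →g circK t) :
    (cycleSq (4*t)).Adj (f 0) (f 2) := by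
  haveI : Fact (1 < 2*t+1) := ⟨by omega⟩
  set B : ZMod (4*t) := ((2*t:ℕ) : ZMod (4*t)) with hBdef
  have hBB := castBB ht
  have h1 : (1 : ZMod (4*t)) ≠ 0 := by
    have := cast_ne_zero ht (a := 1) (by omega) (by omega); simpa using this
  have h2 : (2 : ZMod (4*t)) ≠ 0 := by
    have := cast_ne_zero ht (a := 2) (by omega) (by omega); simpa using this
  set s : ℕ → ZMod (4*t) := fun n => f ((n:ℕ) : ZMod (2*t+1)) with hsdef
  have step : ∀ n : ℕ, (circK t).Adj (s n) (s (n+1)) := by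
    intro n
    apply f.map_adj
    constructor
    · intro h
      have h1' : ((n:ℕ) + 1 : ZMod (2*t+1)) = (n:ℕ) + 1 := by push_cast; ring
      rw [Nat.cast_add, Nat.cast_one] at h
      exact one_ne_zero (left_eq_add.mp h)
    · left; push_cast; ring
  have step' : ∀ n : ℕ, s (n+1) ≠ s n ∧
      (s (n+1) - s n = B - 1 ∨ s (n+1) - s n = B ∨ s (n+1) - s n = B + 1) := by
    intro n
    have h := (circK_adj ht).mp (step n)
    exact ⟨h.1.symm, h.2⟩
  set e : ℕ → ℤ := fun n =>
    if s (n+1) - s n = B - 1 then -1 else if s (n+1) - s n = B + 1 then 1 else 0 with hedef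
  have hne1 : B - 1 ≠ B + 1 := by
    intro h; apply h2; linear_combination -h
  have he : ∀ n : ℕ, s (n+1) - s n = B + ((e n : ℤ) : ZMod (4*t)) ∧ -1 ≤ e n ∧ e n ≤ 1 := by
    intro n
    rcases (step' n).2 with h|h|h
    · have : e n = -1 := by simp only [hedef, if_pos h]
      refine ⟨?_, by omega, by omega⟩
      rw [this, h]; push_cast; ring
    · have c1 : ¬ (s (n+1) - s n = B - 1) := by
        rw [h]; intro hh; apply h1; linear_combination hh
      have c2 : ¬ (s (n+1) - s n = B + 1) := by
        rw [h]; intro hh; apply h1; linear_combination -hh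
      have : e n = 0 := by simp only [hedef, if_neg c1, if_neg c2]
      refine ⟨?_, by omega, by omega⟩
      rw [this, h]; push_cast; ring
    · have c1 : ¬ (s (n+1) - s n = B - 1) := by rw [h]; exact fun hh => hne1 hh.symm
      have : e n = 1 := by simp only [hedef, if_neg c1, if_pos h]
      refine ⟨?_, by omega, by omega⟩
      rw [this, h]; push_cast; ring
  -- telescoping sum over the whole cycle
  have tel : ∑ n ∈ Finset.range (2*t+1), (s (n+1) - s n) = 0 := by
    rw [Finset.sum_range_sub]
    have hM0 : ((2*t+1 : ℕ) : ZMod (2*t+1)) = 0 := ZMod.natCast_self _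
    simp only [hsdef, hM0, Nat.cast_zero, sub_self]
  have tel2 : ∑ n ∈ Finset.range (2*t+1), (B + ((e n : ℤ) : ZMod (4*t))) = 0 := by
    rw [← tel]
    exact Finset.sum_congr rfl fun n _ => ((he n).1).symm
  have hsplit : (((2*t+1 : ℕ) : ZMod (4*t)) * B)
      + ((∑ n ∈ Finset.range (2*t+1), e n : ℤ) : ZMod (4*t)) = 0 := by
    rw [← tel2, Finset.sum_add_distrib, Finset.sum_const, Finset.card_range,
      nsmul_eq_mul, Int.cast_sum]
  rw [hMB ht] at hsplit
  set S : ℤ := ∑ n ∈ Finset.range (2*t+1), e n with hSdef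
  have hdvd : ((4*t : ℕ) : ℤ) ∣ S + 2*t := by
    rw [← ZMod.intCast_zmod_eq_zero_iff_dvd]
    push_cast
    calc (S : ZMod (4*t)) + 2*(t:ZMod (4*t)) = B + (S : ZMod (4*t)) := by
          rw [hBdef]; push_cast; ring
      _ = 0 := hsplit
  have hSub : S ≤ 2*t+1 := by
    calc S ≤ ∑ _n ∈ Finset.range (2*t+1), (1:ℤ) :=
          Finset.sum_le_sum fun n _ => (he n).2.2
      _ = 2*t+1 := by simp
  have hSlb : -(2*(t:ℤ)+1) ≤ S := by
    calc (-(2*(t:ℤ)+1)) = ∑ _n ∈ Finset.range (2*t+1), (-1:ℤ) := by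
          rw [Finset.sum_const, Finset.card_range, nsmul_eq_mul]; push_cast; ring
      _ ≤ S := Finset.sum_le_sum fun n _ => (he n).2.1
  obtain ⟨c, hc⟩ := hdvd
  have htz : (2:ℤ) ≤ (t:ℤ) := by exact_mod_cast ht
  have hcast : ((4*t : ℕ) : ℤ) = 4*(t:ℤ) := by push_cast; ring
  rw [hcast] at hc
  have hS : S = 2*t ∨ S = -(2*(t:ℤ)) := by
    have hc01 : c = 0 ∨ c = 1 := by
      by_contra hcon
      push_neg at hcon
      rcases lt_trichotomy c 0 with h|h|h
      · have : c ≤ -1 := by omega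
        nlinarith
      · exact hcon.1 h
      · have : 2 ≤ c := by omega
        nlinarith
    rcases hc01 with h|h
    · right; rw [h] at hc; linarith
    · left; rw [h] at hc; linarith
  -- the difference f 2 - f 0
  have hs0 : s 0 = f 0 := by simp [hsdef]
  have hs2 : s 2 = f 2 := by
    have : ((2:ℕ) : ZMod (2*t+1)) = 2 := by push_cast; ring
    simp [hsdef, this]
  have hdiff : f 2 - f 0 = ((e 0 + e 1 : ℤ) : ZMod (4*t)) := by
    have h0 := (he 0).1
    have h1' := (he 1).1
    have : s 2 - s 0 = (s (1+1) - s 1) + (s (0+1) - s 0) := by ring_nf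
    rw [h0, h1'] at this
    rw [← hs0, ← hs2, this]
    push_cast
    linear_combination hBB
  have h01sub : ({0,1} : Finset ℕ) ⊆ Finset.range (2*t+1) := by
    intro x hx
    simp only [Finset.mem_insert, Finset.mem_singleton] at hx
    rcases hx with h|h <;> simp [h] <;> omega
  rcases hS with hS | hS
  · -- all e's are +1 except one 0
    have hsum1 : ∑ n ∈ Finset.range (2*t+1), (1 - e n) = 1 := by
      rw [Finset.sum_sub_distrib, Finset.sum_const, Finset.card_range, nsmul_eq_mul,
        ← hSdef, hS]
      push_cast; ring
    have hkey : (1 - e 0) + (1 - e 1) ≤ 1 := by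
      have hmono := Finset.sum_le_sum_of_subset_of_nonneg (f := fun n => 1 - e n) h01sub
        (fun i _ _ => by have := (he i).2.2; omega)
      rw [Finset.sum_pair (by norm_num), hsum1] at hmono
      exact hmono
    have hb0 := (he 0).2
    have hb1 := (he 1).2
    have hc12 : e 0 + e 1 = 1 ∨ e 0 + e 1 = 2 := by omega
    rcases hc12 with h|h
    · have hd : f 2 - f 0 = 1 := by rw [hdiff, h]; push_cast; ring
      refine ⟨fun hh => h1 ?_, Or.inl hd⟩
      rw [hh, sub_self] at hd
      exact hd.symm
    · have hd : f 2 - f 0 = 2 := by rw [hdiff, h]; push_cast; ring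
      refine ⟨fun hh => h2 ?_, Or.inr (Or.inr (Or.inl hd))⟩
      rw [hh, sub_self] at hd
      exact hd.symm
  · -- all e's are -1 except one 0
    have hsum1 : ∑ n ∈ Finset.range (2*t+1), (1 + e n) = 1 := by
      rw [Finset.sum_add_distrib, Finset.sum_const, Finset.card_range, nsmul_eq_mul,
        ← hSdef, hS]
      push_cast; ring
    have hkey : (1 + e 0) + (1 + e 1) ≤ 1 := by
      have hmono := Finset.sum_le_sum_of_subset_of_nonneg (f := fun n => 1 + e n) h01sub
        (fun i _ _ => by have := (he i).2.1; omega)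
      rw [Finset.sum_pair (by norm_num), hsum1] at hmono
      exact hmono
    have hb0 := (he 0).2
    have hb1 := (he 1).2
    have hc12 : e 0 + e 1 = -1 ∨ e 0 + e 1 = -2 := by omega
    rcases hc12 with h|h
    · have hd : f 0 - f 2 = 1 := by
        rw [show f 0 - f 2 = -(f 2 - f 0) by ring, hdiff, h]; push_cast; ring
      refine ⟨fun hh => h1 ?_, Or.inr (Or.inl hd)⟩
      rw [hh, sub_self] at hd
      exact hd.symm
    · have hd : f 0 - f 2 = 2 := by
        rw [show f 0 - f 2 = -(f 2 - f 0) by ring, hdiff, h]; push_cast; ring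
      refine ⟨fun hh => h2 ?_, Or.inr (Or.inr (Or.inr hd))⟩
      rw [hh, sub_self] at hd
      exact hd.symm

/-- The explicit homomorphism map with "defect" at position `k`. -/
private def homF (t : ℕ) (u : ZMod (4*t)) (k : ℕ) : ZMod (2*t+1) → ZMod (4*t) :=
  fun x => u + ((2*t+1:ℕ) : ZMod (4*t)) * (x.val : ZMod (4*t)) - (if x.val ≤ k then 0 else 1)

private lemma homF_step (ht : 2 ≤ t) (u : ZMod (4*t)) (k : ℕ) (hk : k ≤ 2*t)
    (x : ZMod (2*t+1)) : (circK t).Adj (homF t u k x) (homF t u k (x+1)) := by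
  haveI : NeZero (2*t+1) := ⟨by omega⟩
  haveI : Fact (1 < 2*t+1) := ⟨by omega⟩
  have hBB := castBB (t := t) ht
  have hBne : ((2*t:ℕ) : ZMod (4*t)) ≠ 0 := cast_ne_zero ht (by omega) (by omega)
  have hB1ne : ((2*t:ℕ) : ZMod (4*t)) + 1 ≠ 0 := by
    have hn : ((2*t+1:ℕ) : ZMod (4*t)) ≠ 0 := cast_ne_zero ht (by omega) (by omega)
    intro h; apply hn; push_cast at h ⊢; linear_combination h
  have hxlt : x.val < 2*t+1 := ZMod.val_lt x
  have key : homF t u k (x+1) - homF t u k x = ((2*t:ℕ) : ZMod (4*t)) ∨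
      homF t u k (x+1) - homF t u k x = ((2*t:ℕ) : ZMod (4*t)) + 1 := by
    rcases Nat.lt_or_ge x.val (2*t) with hx | hx
    · -- non-wrap step
      have hv1 : (x+1).val = x.val + 1 := by
        rw [ZMod.val_add_of_lt]
        · rw [ZMod.val_one]
        · rw [ZMod.val_one]; omega
      simp only [homF, hv1]
      have hcast : ((x.val + 1 : ℕ) : ZMod (4*t)) = (x.val : ZMod (4*t)) + 1 := by
        push_cast; ring
      rw [hcast]
      rcases Nat.lt_or_ge k (x.val + 1) with hk1 | hk1
      · rcases Nat.lt_or_ge x.val (k+1) with hk2 | hk2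
        · -- k = x.val : defect step
          left
          rw [if_neg (by omega : ¬ (x.val + 1 ≤ k)), if_pos (by omega : x.val ≤ k)]
          push_cast
          ring
        · -- x.val > k
          right
          rw [if_neg (by omega : ¬ (x.val + 1 ≤ k)), if_neg (by omega : ¬ (x.val ≤ k))]
          push_cast
          ring
      · -- x.val + 1 ≤ k
        right
        rw [if_pos hk1, if_pos (by omega : x.val ≤ k)]
        push_cast
        ring
    · -- wrap step : x.val = 2*t
      have hx' : x.val = 2*t := by omega
      have hx0 : x + 1 = 0 := by
        rw [← ZMod.natCast_zmod_val x, hx']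
        rw [show ((2*t : ℕ) : ZMod (2*t+1)) + 1 = ((2*t+1 : ℕ) : ZMod (2*t+1)) by
          push_cast; ring]
        exact ZMod.natCast_self _
      rw [hx0]
      simp only [homF, ZMod.val_zero, Nat.cast_zero, mul_zero, Nat.zero_le, if_pos, hx']
      rw [hMB ht]
      rcases Nat.lt_or_ge k (2*t) with hkk | hkk
      · right
        rw [if_neg (by omega : ¬ (2*t ≤ k))]
        linear_combination -hBB
      · left
        rw [if_pos (by omega : 2*t ≤ k)]
        linear_combination -hBB
  rw [circK_adj ht]
  constructor
  · intro h
    rcases key with hkk | hkk <;> rw [h] at hkk <;> simp only [sub_self] at hkk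
    · exact hBne hkk.symm
    · exact hB1ne hkk.symm
  · rcases key with hkk | hkk
    · exact Or.inr (Or.inl hkk)
    · exact Or.inr (Or.inr hkk)

private def homFHom (ht : 2 ≤ t) (u : ZMod (4*t)) (k : ℕ) (hk : k ≤ 2*t) :
    cycleG (2*t+1) →g circK t where
  toFun := homF t u k
  map_rel' := by
    intro x y hxy
    rcases hxy.2 with h | h
    · have : y = x + 1 := by linear_combination h
      rw [this]
      exact homF_step ht u k hk x
    · have : x = y + 1 := by linear_combination h
      rw [this]
      exact (homF_step ht u k hk y).symm

private lemma homFHom_zero (ht : 2 ≤ t) (u : ZMod (4*t)) (k : ℕ) (hk : k ≤ 2*t) :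
    homFHom ht u k hk 0 = u := by
  show homF t u k 0 = u
  simp [homF]

private lemma val_two (ht : 2 ≤ t) : (2 : ZMod (2*t+1)).val = 2 := by
  haveI : NeZero (2*t+1) := ⟨by omega⟩
  rw [show (2 : ZMod (2*t+1)) = ((2:ℕ) : ZMod (2*t+1)) by push_cast; ring]
  exact ZMod.val_cast_of_lt (by omega)

private lemma homFHom_two_zero (ht : 2 ≤ t) (u : ZMod (4*t)) :
    homFHom ht u 0 (by omega) 2 = u + 1 := by
  show homF t u 0 2 = u + 1
  have hBB := castBB ht
  simp only [homF, val_two ht]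
  rw [if_neg (by omega)]
  push_cast
  push_cast at hBB
  linear_combination hBB

private lemma homFHom_two_top (ht : 2 ≤ t) (u : ZMod (4*t)) :
    homFHom ht u (2*t) (le_refl _) 2 = u + 2 := by
  show homF t u (2*t) 2 = u + 2
  have hBB := castBB ht
  simp only [homF, val_two ht]
  rw [if_pos (by omega)]
  push_cast
  push_cast at hBB
  linear_combination hBB

/-- Negation is an automorphism of `circK`. -/
private def negHom (ht : 2 ≤ t) : circK t →g circK t where
  toFun := fun x => -x
  map_rel' := by
    intro a b hab
    rw [circK_adj ht] at hab ⊢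
    have hBB := castBB ht
    refine ⟨fun h => hab.1 (neg_inj.mp h), ?_⟩
    rcases hab.2 with h|h|h
    · exact Or.inr (Or.inr (by linear_combination -h - hBB))
    · exact Or.inr (Or.inl (by linear_combination -h - hBB))
    · exact Or.inl (by linear_combination -h - hBB)

end Aux

/-- Applying to `K_{4t/(2t-1)}` the indicator `(C_{2t+1}, 0, 2)` (with distinguished
vertices `0` and `2` at distance 2) yields a graph isomorphic to `C_{4t}^2`:
there is a bijection `e` of the vertex set such that `u,v` are joined by the indicator
construction iff `e u, e v` are adjacent in `C_{4t}^2`. -/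
theorem stmt7 (t : ℕ) (ht : 2 ≤ t) :
    ∃ e : ZMod (4 * t) ≃ ZMod (4 * t),
      ∀ u v : ZMod (4 * t),
        (∃ f : cycleG (2 * t + 1) →g circK t, f 0 = u ∧ f 2 = v) ↔
          (cycleSq (4 * t)).Adj (e u) (e v) := by
  refine ⟨Equiv.refl _, fun u v => ?_⟩
  simp only [Equiv.refl_apply]
  constructor
  · rintro ⟨f, hu, hv⟩
    rw [← hu, ← hv]
    exact forward ht f
  · rintro ⟨hne, hcase⟩
    rcases hcase with h|h|h|h
    · -- v = u + 1
      refine ⟨homFHom ht u 0 (by omega), homFHom_zero ht u 0 (by omega), ?_⟩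
      rw [homFHom_two_zero ht u]
      linear_combination -h
    · -- u = v + 1 : negate
      refine ⟨(negHom ht).comp (homFHom ht (-u) 0 (by omega)), ?_, ?_⟩
      · show -(homFHom ht (-u) 0 (by omega) 0) = u
        rw [homFHom_zero]; ring
      · show -(homFHom ht (-u) 0 (by omega) 2) = v
        rw [homFHom_two_zero]
        linear_combination h
    · -- v = u + 2
      refine ⟨homFHom ht u (2*t) (le_refl _), homFHom_zero ht u (2*t) (le_refl _), ?_⟩
      rw [homFHom_two_top ht u]
      linear_combination -h
    · -- u = v + 2 : negate
      refine ⟨(negHom ht).comp (homFHom ht (-u) (2*t) (le_refl _)), ?_, ?_⟩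
      · show -(homFHom ht (-u) (2*t) (le_refl _) 0) = u
        rw [homFHom_zero]; ring
      · show -(homFHom ht (-u) (2*t) (le_refl _) 2) = v
        rw [homFHom_two_top]
        linear_combination h
end

section
/- Let H be a signed graph, (I,i,j) an indicator (a signed graph I with distinguished vertices i,j admitting an automorphism swapping i and j), and H* the graph on V(H) with u adjacent to v iff some sign-preserving homomorphism I → H maps i to u and j to v. Let G be any graph and f(G) the signed graph obtained by replacing each edge uv of G by a copy of I, identifying u with i and v with j. Then G admits a homomorphism to H* if and only if f(G) admits a sign-preserving homomorphism to H. -/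
/-- A signed graph: a graph with positive and negative (symmetric) edge relations. -/
structure SignedGraph (V : Type*) where
  pos : V → V → Prop
  neg : V → V → Prop
  pos_symm : ∀ u v, pos u v → pos v u
  neg_symm : ∀ u v, neg u v → neg v u

/-- `f` is a sign-preserving homomorphism from `G` to `H`. -/
def SignedGraph.IsHom {V W : Type*} (G : SignedGraph V) (H : SignedGraph W)
    (f : V → W) : Prop :=
  (∀ u v, G.pos u v → H.pos (f u) (f v)) ∧ (∀ u v, G.neg u v → H.neg (f u) (f v))

/-- Index set for the copies of the indicator: one copy per edge of `G`,
oriented by the linear order on the vertices. -/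
def EdgeIdx {V : Type*} [LinearOrder V] (G : SimpleGraph V) : Type _ :=
  {p : V × V // p.1 < p.2 ∧ G.Adj p.1 p.2}

/-- The embedding of the copy of the indicator indexed by `c` into the vertex set of the
replacement graph: the distinguished vertices `i0`, `j0` go to the two endpoints of the
edge `c`, all other vertices go to fresh vertices private to the copy `c`. -/
def iotaMap {V VI : Type*} [LinearOrder V] [DecidableEq VI] (G : SimpleGraph V)
    (i0 j0 : VI) (c : EdgeIdx G) (w : VI) : V ⊕ (EdgeIdx G × VI) :=
  if w = i0 then Sum.inl c.1.1 else if w = j0 then Sum.inl c.1.2 else Sum.inr (c, w)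

/-- The signed graph `f(G)` obtained from `G` by replacing each edge `uv` by a copy of the
indicator `(I, i0, j0)`, identifying `u` with `i0` and `v` with `j0`. -/
def replaceEdges {V VI : Type*} [LinearOrder V] [DecidableEq VI] (G : SimpleGraph V)
    (I : SignedGraph VI) (i0 j0 : VI) : SignedGraph (V ⊕ (EdgeIdx G × VI)) where
  pos x y := ∃ c a b, I.pos a b ∧ x = iotaMap G i0 j0 c a ∧ y = iotaMap G i0 j0 c b
  neg x y := ∃ c a b, I.neg a b ∧ x = iotaMap G i0 j0 c a ∧ y = iotaMap G i0 j0 c b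
  pos_symm := by
    rintro x y ⟨c, a, b, hab, hx, hy⟩
    exact ⟨c, b, a, I.pos_symm _ _ hab, hy, hx⟩
  neg_symm := by
    rintro x y ⟨c, a, b, hab, hx, hy⟩
    exact ⟨c, b, a, I.neg_symm _ _ hab, hy, hx⟩

/-- Let `(I, i0, j0)` be an indicator (a signed graph with two distinguished vertices that
can be swapped by a sign-preserving automorphism `σ`), `H` a signed graph, and `H*` the
indicator graph (`u ~ v` iff some sign-preserving homomorphism `I → H` sends `i0 ↦ u`,
`j0 ↦ v`).  Then a graph `G` admits a homomorphism to `H*` iff the signed graph `f(G)`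
(each edge of `G` replaced by a copy of `I`) admits a sign-preserving homomorphism to `H`. -/
theorem stmt9 {V VI W : Type*} [LinearOrder V] [DecidableEq VI]
    (G : SimpleGraph V) (I : SignedGraph VI) (i0 j0 : VI) (H : SignedGraph W)
    (σ : VI ≃ VI)
    (hσpos : ∀ a b, I.pos a b ↔ I.pos (σ a) (σ b))
    (hσneg : ∀ a b, I.neg a b ↔ I.neg (σ a) (σ b))
    (hσi : σ i0 = j0) (hσj : σ j0 = i0) :
    (∃ g : V → W, ∀ u v, G.Adj u v →
        ∃ f : VI → W, I.IsHom H f ∧ f i0 = g u ∧ f j0 = g v) ↔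
    (∃ h : V ⊕ (EdgeIdx G × VI) → W, (replaceEdges G I i0 j0).IsHom H h) := by
  constructor
  · rintro ⟨g, hg⟩
    choose F hF hFi hFj using fun c : EdgeIdx G => hg c.1.1 c.1.2 c.2.2
    have key : ∀ (c : EdgeIdx G) (w : VI),
        Sum.elim g (fun p : EdgeIdx G × VI => F p.1 p.2) (iotaMap G i0 j0 c w) = F c w := by
      intro c w
      unfold iotaMap
      split_ifs with h1 h2
      · subst h1; simpa using (hFi c).symm
      · subst h2; simpa using (hFj c).symm
      · rfl
    refine ⟨Sum.elim g (fun p : EdgeIdx G × VI => F p.1 p.2), ?_, ?_⟩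
    · rintro x y ⟨c, a, b, hab, rfl, rfl⟩
      rw [key, key]
      exact (hF c).1 a b hab
    · rintro x y ⟨c, a, b, hab, rfl, rfl⟩
      rw [key, key]
      exact (hF c).2 a b hab
  · rintro ⟨h, hpos, hneg⟩
    by_cases hij : i0 = j0
    · by_cases hc : Nonempty (EdgeIdx G)
      · obtain ⟨c0⟩ := hc
        refine ⟨fun _ => h (iotaMap G i0 j0 c0 i0), fun u v huv => ?_⟩
        refine ⟨h ∘ iotaMap G i0 j0 c0, ⟨?_, ?_⟩, rfl, ?_⟩
        · intro a b hab; exact hpos _ _ ⟨c0, a, b, hab, rfl, rfl⟩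
        · intro a b hab; exact hneg _ _ ⟨c0, a, b, hab, rfl, rfl⟩
        · simp [← hij]
      · refine ⟨h ∘ Sum.inl, fun u v huv => ?_⟩
        rcases lt_or_gt_of_ne huv.ne with hlt | hlt
        · exact absurd ⟨⟨(u, v), hlt, huv⟩⟩ hc
        · exact absurd ⟨⟨(v, u), hlt, huv.symm⟩⟩ hc
    · refine ⟨h ∘ Sum.inl, fun u v huv => ?_⟩
      rcases lt_or_gt_of_ne huv.ne with hlt | hlt
      · refine ⟨h ∘ iotaMap G i0 j0 ⟨(u, v), hlt, huv⟩, ⟨?_, ?_⟩, ?_, ?_⟩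
        · intro a b hab; exact hpos _ _ ⟨_, a, b, hab, rfl, rfl⟩
        · intro a b hab; exact hneg _ _ ⟨_, a, b, hab, rfl, rfl⟩
        · simp [iotaMap]
        · simp [iotaMap, Ne.symm hij]
      · refine ⟨h ∘ iotaMap G i0 j0 ⟨(v, u), hlt, huv.symm⟩ ∘ σ, ⟨?_, ?_⟩, ?_, ?_⟩
        · intro a b hab
          exact hpos _ _ ⟨_, σ a, σ b, (hσpos a b).mp hab, rfl, rfl⟩
        · intro a b hab
          exact hneg _ _ ⟨_, σ a, σ b, (hσneg a b).mp hab, rfl, rfl⟩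
        · simp [iotaMap, hσi, Ne.symm hij]
        · simp [iotaMap, hσj]
end

section
/- Let k ≥ 3 be odd, and let ρ(UC_{2k}) be the signed graph on vertices u_0,...,u_{4k-1} with positive edges u_i u_{i+1} and negative edges u_i u_{i+2k-1} (indices mod 4k). Let H* be the graph on {u_0,...,u_{4k-1}} with u_a adjacent to u_b iff b - a ≡ ±(2k-2) or 2k (mod 4k). Then H* admits a homomorphism onto a cycle of length k contained in it; in particular the core of H* is the odd cycle C_k. -/
/-- Adjacency in the indicator graph `H*` on `ZMod (4*k)`:
`a ~ b` iff `b - a ≡ ±(2k-2)` or `2k (mod 4k)`. -/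
def hstarAdj (k : ℕ) (a b : ZMod (4 * k)) : Prop :=
  b - a = ((2 * k - 2 : ℕ) : ZMod (4 * k)) ∨
  a - b = ((2 * k - 2 : ℕ) : ZMod (4 * k)) ∨
  b - a = ((2 * k : ℕ) : ZMod (4 * k))

lemma f_aux {k : ℕ} (hk : 0 < k) (x : ℕ) :
    ((4 * ((x : ZMod (4*k)).val / 4) : ℕ) : ZMod (4*k)) = ((4*(x/4) : ℕ) : ZMod (4*k)) := by
  haveI : NeZero (4*k) := ⟨by omega⟩
  rw [ZMod.val_natCast]
  have key : 4*(x/4) = 4*k*(x/(4*k)) + 4*((x % (4*k))/4) := by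
    have h1 : x = 4*k*(x/(4*k)) + x % (4*k) := (Nat.div_add_mod x (4*k)).symm
    have h2 : x / 4 = k*(x/(4*k)) + (x % (4*k))/4 := by
      conv_lhs => rw [h1]
      rw [show 4*k*(x/(4*k)) = 4*(k*(x/(4*k))) by ring]
      exact Nat.mul_add_div (by norm_num) _ _
    rw [h2]; ring
  rw [key]
  push_cast
  rw [show ((4:ZMod (4*k))*(k:ZMod (4*k))) = ((4*k : ℕ) : ZMod (4*k)) by push_cast; ring,
    ZMod.natCast_self]
  ring

/-- For odd `k ≥ 3`, the graph `H*` (on `ZMod (4*k)`, `a ~ b` iff `b - a ≡ ±(2k-2)` or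
`2k`) retracts onto a cycle of length `k` contained in it: there is an injective map `c`
of the `k`-cycle into `H*` sending cycle edges to edges, and an endomorphism `f` of `H*`
whose image is exactly the image of `c`.  In particular the core of `H*` is `C_k`. -/
theorem stmt11 (k : ℕ) (hk : 3 ≤ k) (hodd : Odd k) :
    ∃ (c : ZMod k → ZMod (4 * k)) (f : ZMod (4 * k) → ZMod (4 * k)),
      Function.Injective c ∧
      (∀ i j : ZMod k, (j - i = 1 ∨ i - j = 1) → hstarAdj k (c i) (c j)) ∧
      (∀ a b, hstarAdj k a b → hstarAdj k (f a) (f b)) ∧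
      (∀ a, ∃ i, f a = c i) ∧
      (∀ i, ∃ a, f a = c i) := by
  obtain ⟨m, hm⟩ := hodd
  haveI : NeZero k := ⟨by omega⟩
  haveI : NeZero (4*k) := ⟨by omega⟩
  haveI : Fact (1 < k) := ⟨by omega⟩
  have hk0 : 0 < k := by omega
  have h42 : 2*k - 2 = 4*m := by omega
  have h2k : 2*k = 4*m + 2 := by omega
  have h84 : ((8*(m:ZMod (4*k)) + 4 : ZMod (4*k))) = 0 := by
    have : ((8*m+4 : ℕ) : ZMod (4*k)) = 0 := by
      rw [show 8*m+4 = 4*k from by omega]; exact ZMod.natCast_self _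
    push_cast at this; exact this
  have hcop : Nat.Coprime m k := by
    rw [hm, show 2*m+1 = 1+2*m from by ring]
    exact (Nat.coprime_add_mul_right_right m 1 2).mpr (Nat.coprime_one_right m)
  -- key congruence for c
  have hmod : ∀ x y : ℕ, x ≡ y [MOD k] →
      ((4*m*x : ℕ) : ZMod (4*k)) = ((4*m*y : ℕ) : ZMod (4*k)) := by
    intro x y h
    rw [ZMod.natCast_eq_natCast_iff]
    have := (h.mul_left' (c := 4)).mul_left m
    rw [show m*(4*x) = 4*m*x from by ring, show m*(4*y) = 4*m*y from by ring] at this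
    exact this
  -- self-cast lemma
  have hval : ∀ a : ZMod (4*k), ((a.val : ℕ) : ZMod (4*k)) = a := by
    intro a; rw [ZMod.natCast_val, ZMod.cast_id]
  refine ⟨fun i => ((4*m*i.val : ℕ) : ZMod (4*k)),
          fun a => ((4*(a.val/4) : ℕ) : ZMod (4*k)), ?_, ?_, ?_, ?_, ?_⟩
  · -- injectivity
    intro i j hij
    simp only at hij
    have h2 := congrArg (ZMod.castHom (show k ∣ 4*k from ⟨4, by ring⟩) (ZMod k)) hij
    rw [map_natCast, map_natCast] at h2
    push_cast at h2
    rw [ZMod.natCast_val, ZMod.natCast_val, ZMod.cast_id, ZMod.cast_id] at h2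
    have hk0' : ((2*m+1 : ℕ) : ZMod k) = 0 := by rw [← hm]; exact ZMod.natCast_self k
    push_cast at hk0'
    have h3 : (2 : ZMod k) * i = 2 * j := by linear_combination -h2 + (2*i - 2*j) * hk0'
    have hu : IsUnit (2 : ZMod k) := by
      have hc2 : Nat.Coprime 2 k := Nat.coprime_two_left.mpr ⟨m, hm⟩
      have := (ZMod.unitOfCoprime 2 hc2).isUnit
      rwa [ZMod.coe_unitOfCoprime, Nat.cast_ofNat] at this
    exact hu.mul_left_cancel h3
  · -- cycle edges
    intro i j hij
    simp only [hstarAdj, h42, h2k, Nat.add_sub_cancel]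
    have step : ∀ i : ZMod k,
        ((4*m*(1+i).val : ℕ) : ZMod (4*k)) = ((4*m*i.val : ℕ) : ZMod (4*k)) + ((4*m : ℕ) : ZMod (4*k)) := by
      intro i
      have hv : (1+i).val ≡ 1 + i.val [MOD k] := by
        rw [ZMod.val_add, ZMod.val_one]
        exact Nat.mod_modEq _ _
      rw [hmod _ _ hv]
      push_cast; ring
    rcases hij with h | h
    · have hj : j = 1 + i := by linear_combination h
      left
      rw [hj, step]; ring
    · have hi : i = 1 + j := by linear_combination h
      right; left
      rw [hi, step]; ring
  · -- f is a homomorphism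
    intro a b hab
    simp only [hstarAdj, h42, h2k, Nat.add_sub_cancel] at hab ⊢
    rcases hab with h | h | h
    · -- b - a = 4m
      have hb : b = ((a.val + 4*m : ℕ) : ZMod (4*k)) := by
        push_cast at h ⊢; rw [hval a]; linear_combination h
      left
      rw [hb, f_aux hk0, show (a.val + 4*m)/4 = a.val/4 + m from by omega]
      push_cast; ring
    · -- a - b = 4m, so b = a + (4m+4)
      have hb : b = ((a.val + (4*m+4) : ℕ) : ZMod (4*k)) := by
        push_cast at h ⊢; rw [hval a]; linear_combination -h - h84
      right; left
      rw [hb, f_aux hk0, show (a.val + (4*m+4))/4 = a.val/4 + (m+1) from by omega]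
      push_cast; linear_combination -h84
    · -- b - a = 4m+2
      have hb : b = ((a.val + (4*m+2) : ℕ) : ZMod (4*k)) := by
        push_cast at h ⊢; rw [hval a]; linear_combination h
      by_cases hr : a.val % 4 ≤ 1
      · left
        rw [hb, f_aux hk0, show (a.val + (4*m+2))/4 = a.val/4 + m from by omega]
        push_cast; ring
      · right; left
        rw [hb, f_aux hk0, show (a.val + (4*m+2))/4 = a.val/4 + (m+1) from by omega]
        push_cast; linear_combination -h84
  · -- image of f lands in image of c
    intro a
    set t := a.val / 4 with ht
    set u := ZMod.unitOfCoprime m hcop with hu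
    refine ⟨(u⁻¹ : (ZMod k)ˣ) * ((t : ℕ) : ZMod k), ?_⟩
    set i : ZMod k := (u⁻¹ : (ZMod k)ˣ) * ((t : ℕ) : ZMod k) with hi
    have hmi : ((m : ℕ) : ZMod k) * i = ((t : ℕ) : ZMod k) := by
      rw [hi, ← ZMod.coe_unitOfCoprime m hcop, ← hu, ← mul_assoc, ← Units.val_mul,
        mul_inv_cancel, Units.val_one, one_mul]
    have hmi' : ((m * i.val : ℕ) : ZMod k) = ((t : ℕ) : ZMod k) := by
      push_cast
      rw [ZMod.natCast_val, ZMod.cast_id]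
      exact hmi
    have hcong : m * i.val ≡ t [MOD k] := (ZMod.natCast_eq_natCast_iff _ _ _).mp hmi'
    have := (hcong.mul_left' (c := 4))
    have h4 : ((4*(m*i.val) : ℕ) : ZMod (4*k)) = ((4*t : ℕ) : ZMod (4*k)) :=
      (ZMod.natCast_eq_natCast_iff _ _ _).mpr this
    simp only
    rw [show 4*m*i.val = 4*(m*i.val) from by ring, h4]
  · -- every c i is in the image of f
    intro i
    refine ⟨((4*m*i.val : ℕ) : ZMod (4*k)), ?_⟩
    simp only
    rw [f_aux hk0, show 4*m*i.val = 4*(m*i.val) from by ring,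
      Nat.mul_div_cancel_left _ (by norm_num : 0 < 4)]
end

section
/- Let k = 2t with t ≥ 2, and let H* be the graph on vertices u_0,...,u_{4k-1} with u_a adjacent to u_b iff b - a ≡ ±(2k-2) or 2k (mod 4k). Then H* is the disjoint union of two copies of the circular clique K_{4t/(2t-1)}: one induced on the even-indexed vertices and one on the odd-indexed vertices. -/
/-- Adjacency in `H*` for `k = 2t`, on `ZMod (8*t)`:
`a ~ b` iff `b - a ≡ ±(4t-2)` or `4t (mod 8t)`. -/
def hstarAdj8 (t : ℕ) (a b : ZMod (8 * t)) : Prop :=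
  b - a = ((4 * t - 2 : ℕ) : ZMod (8 * t)) ∨
  a - b = ((4 * t - 2 : ℕ) : ZMod (8 * t)) ∨
  b - a = ((4 * t : ℕ) : ZMod (8 * t))

/-- Adjacency in the circular clique `K_{4t/(2t-1)}` on `ZMod (4*t)`. -/
def circAdj (t : ℕ) (i j : ZMod (4 * t)) : Prop :=
  j - i = ((2 * t - 1 : ℕ) : ZMod (4 * t)) ∨
  j - i = ((2 * t : ℕ) : ZMod (4 * t)) ∨
  j - i = ((2 * t + 1 : ℕ) : ZMod (4 * t))

/-- The embedding of the even-indexed vertices. -/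
def phiEven (t : ℕ) (i : ZMod (4 * t)) : ZMod (8 * t) := ((2 * i.val : ℕ) : ZMod (8 * t))

/-- The embedding of the odd-indexed vertices. -/
def phiOdd (t : ℕ) (i : ZMod (4 * t)) : ZMod (8 * t) := ((2 * i.val + 1 : ℕ) : ZMod (8 * t))

lemma zmod_key (n : ℕ) (a b c : ℕ) :
    ((a : ZMod n) - b = (c : ZMod n)) ↔ (n:ℤ) ∣ (a:ℤ) - b - c := by
  rw [← sub_eq_zero]
  have : (a : ZMod n) - b - c = (((a:ℤ) - b - c : ℤ) : ZMod n) := by push_cast; ring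
  rw [this, ZMod.intCast_zmod_eq_zero_iff_dvd]

lemma zmod_parity (n : ℕ) [NeZero n] (hn : 2 ∣ n) (a b : ZMod n) (c : ℕ) (hc : c % 2 = 0)
    (h : b - a = (c : ZMod n)) : a.val % 2 = b.val % 2 := by
  have hb : b = (c : ZMod n) + a := by rw [← h]; ring
  rw [hb, ZMod.val_add, Nat.mod_mod_of_dvd _ hn, Nat.add_mod, ZMod.val_natCast,
    Nat.mod_mod_of_dvd _ hn, hc]
  omega

/-- The core arithmetic equivalence. -/
lemma dvd_equiv (t : ℕ) (ht : 2 ≤ t) (I J : ℕ) :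
    (((4*t:ℕ):ℤ) ∣ (J:ℤ) - I - ((2*t-1:ℕ):ℤ) ∨
     ((4*t:ℕ):ℤ) ∣ (J:ℤ) - I - ((2*t:ℕ):ℤ) ∨
     ((4*t:ℕ):ℤ) ∣ (J:ℤ) - I - ((2*t+1:ℕ):ℤ)) ↔
    (((8*t:ℕ):ℤ) ∣ (2*J:ℤ) - (2*I) - ((4*t-2:ℕ):ℤ) ∨
     ((8*t:ℕ):ℤ) ∣ (2*I:ℤ) - (2*J) - ((4*t-2:ℕ):ℤ) ∨
     ((8*t:ℕ):ℤ) ∣ (2*J:ℤ) - (2*I) - ((4*t:ℕ):ℤ)) := by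
  have e1 : ((2*t-1:ℕ):ℤ) = 2*(t:ℤ) - 1 := by
    have : (1:ℕ) ≤ 2*t := by omega
    push_cast [Nat.cast_sub this]; ring
  have e2 : ((4*t-2:ℕ):ℤ) = 4*(t:ℤ) - 2 := by
    have : (2:ℕ) ≤ 4*t := by omega
    push_cast [Nat.cast_sub this]; ring
  rw [e1, e2]
  push_cast
  set d : ℤ := (J:ℤ) - I with hd
  constructor
  · rintro (⟨k, hk⟩ | ⟨k, hk⟩ | ⟨k, hk⟩)
    · exact Or.inl ⟨k, by linarith⟩
    · exact Or.inr (Or.inr ⟨k, by linarith⟩)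
    · exact Or.inr (Or.inl ⟨-k - 1, by linarith⟩)
  · rintro (⟨k, hk⟩ | ⟨k, hk⟩ | ⟨k, hk⟩)
    · exact Or.inl ⟨k, by linarith⟩
    · exact Or.inr (Or.inr ⟨-k - 1, by linarith⟩)
    · exact Or.inr (Or.inl ⟨k, by linarith⟩)

lemma circ_iff (t : ℕ) (ht : 2 ≤ t) (i j : ZMod (4 * t)) :
    circAdj t i j ↔
      (((8*t:ℕ):ℤ) ∣ (2*(j.val):ℤ) - (2*(i.val)) - ((4*t-2:ℕ):ℤ) ∨
       ((8*t:ℕ):ℤ) ∣ (2*(i.val):ℤ) - (2*(j.val)) - ((4*t-2:ℕ):ℤ) ∨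
       ((8*t:ℕ):ℤ) ∣ (2*(j.val):ℤ) - (2*(i.val)) - ((4*t:ℕ):ℤ)) := by
  haveI : NeZero (4 * t) := ⟨by omega⟩
  have hji : j - i = ((j.val : ℕ) : ZMod (4*t)) - ((i.val : ℕ) : ZMod (4*t)) := by
    rw [ZMod.natCast_rightInverse, ZMod.natCast_rightInverse]
  rw [circAdj, hji, zmod_key, zmod_key, zmod_key]
  exact dvd_equiv t ht i.val j.val

/-- For `k = 2t` (`t ≥ 2`), the graph `H*` is the disjoint union of two copies of the
circular clique `K_{4t/(2t-1)}`, one induced on the even-indexed vertices and one on the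
odd-indexed vertices: edges never join vertices of different parities, and the maps
`i ↦ 2i` and `i ↦ 2i+1` are isomorphisms from `K_{4t/(2t-1)}` onto the two parity
classes. -/
theorem stmt12 (t : ℕ) (ht : 2 ≤ t) :
    (∀ a b : ZMod (8 * t), hstarAdj8 t a b → a.val % 2 = b.val % 2) ∧
    Function.Injective (phiEven t) ∧ Function.Injective (phiOdd t) ∧
    (∀ a : ZMod (8 * t), a.val % 2 = 0 → ∃ i, phiEven t i = a) ∧
    (∀ a : ZMod (8 * t), a.val % 2 = 1 → ∃ i, phiOdd t i = a) ∧
    (∀ i j : ZMod (4 * t), circAdj t i j ↔ hstarAdj8 t (phiEven t i) (phiEven t j)) ∧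
    (∀ i j : ZMod (4 * t), circAdj t i j ↔ hstarAdj8 t (phiOdd t i) (phiOdd t j)) := by
  haveI : NeZero (8 * t) := ⟨by omega⟩
  haveI : NeZero (4 * t) := ⟨by omega⟩
  have h2 : (2:ℕ) ∣ 8 * t := ⟨4*t, by ring⟩
  have hc1 : (4*t-2) % 2 = 0 := by omega
  have hc2 : (4*t) % 2 = 0 := by omega
  refine ⟨?_, ?_, ?_, ?_, ?_, ?_, ?_⟩
  · rintro a b (h | h | h)
    · exact zmod_parity _ h2 a b _ hc1 h
    · exact (zmod_parity _ h2 b a _ hc1 h).symm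
    · exact zmod_parity _ h2 a b _ hc2 h
  · intro i j h
    have hi : 2 * i.val < 8 * t := by have := ZMod.val_lt i; omega
    have hj : 2 * j.val < 8 * t := by have := ZMod.val_lt j; omega
    have : 2 * i.val = 2 * j.val := by
      have := congrArg ZMod.val h
      rwa [phiEven, phiEven, ZMod.val_cast_of_lt hi, ZMod.val_cast_of_lt hj] at this
    have hv : i.val = j.val := by omega
    calc i = ((i.val : ℕ) : ZMod (4*t)) := (ZMod.natCast_rightInverse i).symm
      _ = ((j.val : ℕ) : ZMod (4*t)) := by rw [hv]
      _ = j := ZMod.natCast_rightInverse j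
  · intro i j h
    have hi : 2 * i.val + 1 < 8 * t := by have := ZMod.val_lt i; omega
    have hj : 2 * j.val + 1 < 8 * t := by have := ZMod.val_lt j; omega
    have : 2 * i.val + 1 = 2 * j.val + 1 := by
      have := congrArg ZMod.val h
      rwa [phiOdd, phiOdd, ZMod.val_cast_of_lt hi, ZMod.val_cast_of_lt hj] at this
    have hv : i.val = j.val := by omega
    calc i = ((i.val : ℕ) : ZMod (4*t)) := (ZMod.natCast_rightInverse i).symm
      _ = ((j.val : ℕ) : ZMod (4*t)) := by rw [hv]
      _ = j := ZMod.natCast_rightInverse j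
  · intro a ha
    refine ⟨((a.val / 2 : ℕ) : ZMod (4*t)), ?_⟩
    have hlt : a.val / 2 < 4 * t := by have := ZMod.val_lt a; omega
    rw [phiEven, ZMod.val_cast_of_lt hlt]
    have : 2 * (a.val / 2) = a.val := by omega
    rw [this]
    exact ZMod.natCast_rightInverse a
  · intro a ha
    refine ⟨((a.val / 2 : ℕ) : ZMod (4*t)), ?_⟩
    have hlt : a.val / 2 < 4 * t := by have := ZMod.val_lt a; omega
    rw [phiOdd, ZMod.val_cast_of_lt hlt]
    have : 2 * (a.val / 2) + 1 = a.val := by omega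
    rw [this]
    exact ZMod.natCast_rightInverse a
  · intro i j
    rw [circ_iff t ht i j, hstarAdj8, phiEven, phiEven, zmod_key, zmod_key, zmod_key]
    push_cast
    tauto
  · intro i j
    rw [circ_iff t ht i j, hstarAdj8, phiOdd, phiOdd, zmod_key, zmod_key, zmod_key]
    constructor
    · rintro (⟨k, hk⟩ | ⟨k, hk⟩ | ⟨k, hk⟩)
      · exact Or.inl ⟨k, by push_cast at hk ⊢; linarith⟩
      · exact Or.inr (Or.inl ⟨k, by push_cast at hk ⊢; linarith⟩)
      · exact Or.inr (Or.inr ⟨k, by push_cast at hk ⊢; linarith⟩)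
    · rintro (⟨k, hk⟩ | ⟨k, hk⟩ | ⟨k, hk⟩)
      · exact Or.inl ⟨k, by push_cast at hk ⊢; linarith⟩
      · exact Or.inr (Or.inl ⟨k, by push_cast at hk ⊢; linarith⟩)
      · exact Or.inr (Or.inr ⟨k, by push_cast at hk ⊢; linarith⟩)
end

section
/- Let I be the signed 4-cycle with two opposite positive edges and two opposite negative edges, with distinguished non-adjacent vertices i and j, and apply the indicator construction to ρ(UC_{2k}) (k ≥ 2, vertices u_0,...,u_{4k-1}, positive edges u_i u_{i+1}, negative edges u_i u_{i+2k-1}). Then for every sign-preserving homomorphism f : I → ρ(UC_{2k}) with f(i) = u_a, one has f(j) ∈ {u_{a+2k-2}, u_{a+2k}, u_{a+2k+2}} (indices mod 4k), and conversely each of these three values of f(j) is realized by some such homomorphism; hence the resulting indicator graph is 3-regular. -/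
/-- Positive adjacency in `ρ(UC_{2k})` on `ZMod (4*k)`: difference `±1`. -/
def rhoPos (k : ℕ) (a b : ZMod (4 * k)) : Prop := b - a = 1 ∨ a - b = 1

/-- Negative adjacency in `ρ(UC_{2k})` on `ZMod (4*k)`: difference `±(2k-1)`. -/
def rhoNeg (k : ℕ) (a b : ZMod (4 * k)) : Prop :=
  b - a = ((2 * k - 1 : ℕ) : ZMod (4 * k)) ∨ a - b = ((2 * k - 1 : ℕ) : ZMod (4 * k))

/-- `a ~ b` in the indicator graph: there is a sign-preserving homomorphism of the
indicator `I` (vertices `i, j, x, y`, positive edges `xi`, `yj`, negative edges `xj`, `yi`)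
to `ρ(UC_{2k})` with `i ↦ a` and `j ↦ b`; the images of `x`, `y` determine it. -/
def indAdj (k : ℕ) (a b : ZMod (4 * k)) : Prop :=
  ∃ x y : ZMod (4 * k), rhoPos k x a ∧ rhoPos k y b ∧ rhoNeg k x b ∧ rhoNeg k y a

/-- For `k ≥ 2`, in the indicator graph obtained by applying `(I, i, j)` to `ρ(UC_{2k})`,
the neighbourhood of each vertex `a` is exactly `{a + 2k-2, a + 2k, a + 2k+2}`, a set of
three vertices; hence the indicator graph is 3-regular. -/
theorem stmt13 (k : ℕ) (hk : 2 ≤ k) :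
    ∀ a : ZMod (4 * k),
      {b | indAdj k a b} =
        ({a + ((2 * k - 2 : ℕ) : ZMod (4 * k)), a + ((2 * k : ℕ) : ZMod (4 * k)),
          a + ((2 * k + 2 : ℕ) : ZMod (4 * k))} : Set (ZMod (4 * k))) ∧
      Set.ncard {b | indAdj k a b} = 3 := by
  have hnz : NeZero (4 * k) := ⟨by omega⟩
  set t : ZMod (4 * k) := ((2 * k : ℕ) : ZMod (4 * k)) with ht
  have hc : ((2 * k - 1 : ℕ) : ZMod (4 * k)) = t - 1 := by
    rw [Nat.cast_sub (by omega), ht]; push_cast; ring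
  have hm2 : ((2 * k - 2 : ℕ) : ZMod (4 * k)) = t - 2 := by
    rw [Nat.cast_sub (by omega), ht]; push_cast; ring
  have hp2 : ((2 * k + 2 : ℕ) : ZMod (4 * k)) = t + 2 := by rw [ht]; push_cast; ring
  have h2t : t + t = 0 := by
    rw [ht, ← Nat.cast_add, show 2 * k + 2 * k = 4 * k by ring]
    exact ZMod.natCast_self _
  have hcast : ∀ m : ℕ, m < 4 * k → m ≠ 0 → ((m : ℕ) : ZMod (4 * k)) ≠ 0 := by
    intro m hm hm0 h
    rw [ZMod.natCast_eq_zero_iff] at h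
    exact absurd (Nat.le_of_dvd (by omega) h) (by omega)
  have h2 : (2 : ZMod (4 * k)) ≠ 0 := by
    have := hcast 2 (by omega) (by omega); simpa using this
  have h4 : (4 : ZMod (4 * k)) ≠ 0 := by
    have := hcast 4 (by omega) (by omega); simpa using this
  intro a
  have hset : {b | indAdj k a b} = ({a + (t - 2), a + t, a + (t + 2)} : Set (ZMod (4 * k))) := by
    ext b
    simp only [Set.mem_setOf_eq, Set.mem_insert_iff, Set.mem_singleton_iff]
    constructor
    · rintro ⟨x, y, hxa, hyb, hxb, hya⟩
      rw [rhoNeg, hc] at hxb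
      rcases hxa with h1 | h1 <;> rcases hxb with h2' | h2'
      · exact Or.inl (by linear_combination h2' - h1)
      · exact Or.inr (Or.inl (by linear_combination -h2' - h1 - h2t))
      · exact Or.inr (Or.inl (by linear_combination h2' + h1))
      · exact Or.inr (Or.inr (by linear_combination -h2' + h1 - h2t))
    · rintro (hb | hb | hb)
      · exact ⟨a - 1, b + 1, Or.inl (by ring), Or.inr (by ring),
          Or.inl (by rw [hc]; linear_combination hb),
          Or.inr (by rw [hc]; linear_combination hb)⟩
      · exact ⟨a + 1, b + 1, Or.inr (by ring), Or.inr (by ring),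
          Or.inl (by rw [hc]; linear_combination hb),
          Or.inl (by rw [hc]; linear_combination -hb - h2t)⟩
      · exact ⟨a + 1, b - 1, Or.inr (by ring), Or.inl (by ring),
          Or.inr (by rw [hc]; linear_combination -hb - h2t),
          Or.inl (by rw [hc]; linear_combination -hb - h2t)⟩
  have hne1 : a + (t - 2) ≠ a + t := fun h => h2 (by linear_combination -h)
  have hne2 : a + (t - 2) ≠ a + (t + 2) := fun h => h4 (by linear_combination -h)
  have hne3 : a + t ≠ a + (t + 2) := fun h => h2 (by linear_combination -h)
  refine ⟨by rw [hset, hm2, hp2], ?_⟩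
  rw [hset]
  exact Set.ncard_eq_three.mpr ⟨_, _, _, hne1, hne2, hne3, rfl⟩
end
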